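/- arXiv:math/0605422 — 9 statements merged into one kernel-verified Lean document; each statement's English description precedes it below -/
import Mathlib

section
/- Assume the Harnack condition: for every L > 0 there is a constant c(L) > 0 such that G(x2,y) ≤ c(L)·G(x1,y) whenever y ∈ D and x1, x2 ∈ D \ B(y, ρ_D(y)/2) satisfy |x1 - x2| ≤ L·min(ρ_D(x1), ρ_D(x2)). Then there exists a constant c ≥ 1 such that for every x, y ∈ D and every A1, A2 ∈ 𝓑(x,y): c^{-1}·g(A1) ≤ g(A2) ≤ c·g(A1). -/
open Metric Set MeasureTheory

/-- Distance to the boundary of `D`. -/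
noncomputable def rho {d : ℕ} (D : Set (EuclideanSpace ℝ (Fin d)))
    (x : EuclideanSpace ℝ (Fin d)) : ℝ :=
  Metric.infDist x (frontier D)

/-- `r(x,y) := max(ρ_D(x), ρ_D(y), |x-y|)`. -/
noncomputable def rxy {d : ℕ} (D : Set (EuclideanSpace ℝ (Fin d)))
    (x y : EuclideanSpace ℝ (Fin d)) : ℝ :=
  max (max (rho D x) (rho D y)) (dist x y)

/-- The set `𝓑(x,y)`. -/
noncomputable def BB {d : ℕ} (D : Set (EuclideanSpace ℝ (Fin d))) (M ε1 : ℝ)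
    (z0 x y : EuclideanSpace ℝ (Fin d)) : Set (EuclideanSpace ℝ (Fin d)) :=
  if rxy D x y < ε1 then
    {A | A ∈ D ∧ rxy D x y / M < rho D A ∧ max (dist x A) (dist y A) < 5 * rxy D x y}
  else {z0}

open Classical in
/-- `g(x) := min(G(x,z0), C1)`, with the convention `g(z0) = C1` (since `G(z0,z0) = ∞`). -/
noncomputable def gfun {d : ℕ} (G : EuclideanSpace ℝ (Fin d) → EuclideanSpace ℝ (Fin d) → ℝ)
    (z0 : EuclideanSpace ℝ (Fin d)) (C1 : ℝ) (x : EuclideanSpace ℝ (Fin d)) : ℝ :=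
  if x = z0 then C1 else min (G x z0) C1

lemma rho_lip' {d : ℕ} (D : Set (EuclideanSpace ℝ (Fin d)))
    (a b : EuclideanSpace ℝ (Fin d)) : rho D a ≤ rho D b + dist a b :=
  Metric.infDist_le_infDist_add_dist

set_option maxHeartbeats 2000000 in
theorem stmt2
    {d : ℕ} (hd : 2 ≤ d)
    {D : Set (EuclideanSpace ℝ (Fin d))} (hDopen : IsOpen D) (hDbdd : Bornology.IsBounded D)
    {κ R : ℝ} (hκ0 : 0 < κ) (hκ2 : κ ≤ 1 / 2) (hR : 0 < R)
    {A : EuclideanSpace ℝ (Fin d) → ℝ → EuclideanSpace ℝ (Fin d)}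
    (hfat : ∀ Q ∈ frontier D, ∀ r : ℝ, 0 < r → r < R →
      A Q r ∈ D ∧ ball (A Q r) (κ * r) ⊆ D ∩ ball Q r)
    {M ε1 : ℝ} (hM : M = 2 / κ) (hε1 : ε1 = R / (12 * M))
    {z0 : EuclideanSpace ℝ (Fin d)} (hz0D : z0 ∈ D)
    (hz0l : 2 * R / M < rho D z0) (hz0u : rho D z0 < R)
    {α : ℝ} (hα0 : 0 < α) (hα2 : α < 2) (hαd : α < d)
    {G : EuclideanSpace ℝ (Fin d) → EuclideanSpace ℝ (Fin d) → ℝ}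
    (hGsymm : ∀ x y, G x y = G y x)
    (hGpos : ∀ x ∈ D, ∀ y ∈ D, x ≠ y → 0 < G x y)
    {C0 : ℝ} (hC0 : 1 ≤ C0)
    (hGup : ∀ x ∈ D, ∀ y ∈ D, x ≠ y → G x y ≤ C0 * dist x y ^ (α - d))
    (hGlow : ∀ x ∈ D, ∀ y ∈ D, x ≠ y → dist x y ≤ rho D y / 2 →
      C0⁻¹ * dist x y ^ (α - d) ≤ G x y)
    {C1 : ℝ} (hC1 : C1 = C0 * (2 : ℝ) ^ ((d : ℝ) - α) * rho D z0 ^ (α - d))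
    (hHarnack : ∀ L : ℝ, 0 < L → ∃ c > 0, ∀ y ∈ D, ∀ x1 ∈ D \ ball y (rho D y / 2),
      ∀ x2 ∈ D \ ball y (rho D y / 2),
      dist x1 x2 ≤ L * min (rho D x1) (rho D x2) → G x2 y ≤ c * G x1 y)
 :
    ∃ c ≥ 1, ∀ x ∈ D, ∀ y ∈ D, ∀ A1 ∈ BB D M ε1 z0 x y, ∀ A2 ∈ BB D M ε1 z0 x y,
      c⁻¹ * gfun G z0 C1 A1 ≤ gfun G z0 C1 A2 ∧ gfun G z0 C1 A2 ≤ c * gfun G z0 C1 A1 := by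
  have hM0 : 0 < M := by rw [hM]; positivity
  have hρz0 : 0 < rho D z0 := lt_trans (by positivity) hz0l
  have hC1pos : 0 < C1 := by rw [hC1]; positivity
  obtain ⟨cL, hcL0, hcL⟩ := hHarnack (10 * M) (by positivity)
  refine ⟨max cL 1, le_max_right _ _, ?_⟩
  intro x hx y hy A1 hA1 A2 hA2
  set c := max cL 1 with hc
  clear_value c
  have hc1 : (1:ℝ) ≤ c := hc ▸ le_max_right cL 1
  have hc0 : 0 < c := lt_of_lt_of_le one_pos hc1
  have key : ∀ B1 ∈ BB D M ε1 z0 x y, ∀ B2 ∈ BB D M ε1 z0 x y,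
      gfun G z0 C1 B2 ≤ c * gfun G z0 C1 B1 := by
    intro B1 hB1 B2 hB2
    by_cases hr : rxy D x y < ε1
    · simp only [BB, if_pos hr, mem_setOf_eq] at hB1 hB2
      obtain ⟨hB1D, hB1ρ, hB1d⟩ := hB1
      obtain ⟨hB2D, hB2ρ, hB2d⟩ := hB2
      set r := rxy D x y with hrdef
      clear_value r
      have hxB1 : dist x B1 < 5 * r := lt_of_le_of_lt (le_max_left _ _) hB1d
      have hxB2 : dist x B2 < 5 * r := lt_of_le_of_lt (le_max_left _ _) hB2d
      have hr0 : 0 < r := by linarith [dist_nonneg (x := x) (y := B1)]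
      have hρx : rho D x ≤ r := by
        rw [hrdef]; exact le_trans (le_max_left _ _) (le_max_left _ _)
      rw [hε1] at hr
      have h1 : r * (12 * M) < R := (lt_div_iff₀ (by positivity)).mp hr
      have h2 : 2 * R < rho D z0 * M := (div_lt_iff₀ hM0).mp hz0l
      have hrR : 6 * r < rho D z0 / 4 := by nlinarith
      have hfar : ∀ B, B ∈ D → r / M < rho D B → dist x B < 5 * r →
          B ∉ ball z0 (rho D z0 / 2) ∧ B ≠ z0 := by
        intro B hBD hBρ hBd
        have hlip : rho D B ≤ rho D x + dist B x := rho_lip' D B x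
        rw [dist_comm] at hlip
        have hρB : rho D B < rho D z0 / 4 := by linarith
        have hlip2 : rho D z0 ≤ rho D B + dist z0 B := rho_lip' D z0 B
        have hdz : rho D z0 / 2 < dist B z0 := by rw [dist_comm]; linarith
        refine ⟨fun hmem => ?_, fun h => ?_⟩
        · rw [mem_ball] at hmem; linarith
        · rw [h, dist_self] at hdz; linarith
      obtain ⟨hB1nb, hB1ne⟩ := hfar B1 hB1D hB1ρ hxB1
      obtain ⟨hB2nb, hB2ne⟩ := hfar B2 hB2D hB2ρ hxB2
      have hrM1 : r < rho D B1 * M := (div_lt_iff₀ hM0).mp hB1ρ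
      have hrM2 : r < rho D B2 * M := (div_lt_iff₀ hM0).mp hB2ρ
      have hdist12 : dist B1 B2 ≤ 10 * M * min (rho D B1) (rho D B2) := by
        have htri : dist B1 B2 ≤ dist B1 x + dist x B2 := dist_triangle _ _ _
        rw [dist_comm B1 x] at htri
        rcases le_total (rho D B1) (rho D B2) with h | h
        · rw [min_eq_left h]; linarith
        · rw [min_eq_right h]; linarith
      have hHar : G B2 z0 ≤ cL * G B1 z0 :=
        hcL z0 hz0D B1 ⟨hB1D, hB1nb⟩ B2 ⟨hB2D, hB2nb⟩ hdist12
      have hG1pos : 0 < G B1 z0 := hGpos B1 hB1D z0 hz0D hB1ne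
      have hcLc : cL ≤ c := hc ▸ le_max_left cL 1
      have hHar' : G B2 z0 ≤ c * G B1 z0 := by nlinarith
      simp only [gfun, if_neg hB1ne, if_neg hB2ne]
      rcases le_total (G B1 z0) C1 with h | h
      · rw [min_eq_left h]
        exact le_trans (min_le_left _ _) hHar'
      · rw [min_eq_right h]
        exact le_trans (min_le_right _ _) (by nlinarith)
    · have hg : ∀ w : EuclideanSpace ℝ (Fin d), gfun G w C1 w = C1 := by
        intro w; unfold gfun; simp
      simp only [BB, if_neg hr, mem_singleton_iff] at hB1 hB2
      rw [hB1, hB2, hg]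
      nlinarith
  refine ⟨?_, key A1 hA1 A2 hA2⟩
  rw [inv_mul_le_iff₀ hc0]
  exact key A2 hA2 A1 hA1
end

section
/- Assume the Harnack condition: for every L > 0 there is a constant c(L) > 0 such that G(x2,y) ≤ c(L)·G(x1,y) whenever y ∈ D and x1, x2 ∈ D \ B(y, ρ_D(y)/2) satisfy |x1 - x2| ≤ L·min(ρ_D(x1), ρ_D(x2)). Then for every c1 > 0 there exists a constant c > 0 such that G(x,y) ≥ c·|x-y|^{α-d} for all x ≠ y in D with |x-y| ≤ c1·min(ρ_D(x), ρ_D(y)). -/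
open Metric Set MeasureTheory

lemma ball_rho_subset {d : ℕ} {D : Set (EuclideanSpace ℝ (Fin d))} (hDopen : IsOpen D)
    {y : EuclideanSpace ℝ (Fin d)} (hy : y ∈ D) : ball y (rho D y) ⊆ D := by
  rcases le_or_gt (rho D y) 0 with h | h
  · rw [ball_eq_empty.2 h]; exact empty_subset _
  have hconn : IsPreconnected (ball y (rho D y)) := (convex_ball y _).isPreconnected
  have hsub : ball y (rho D y) ⊆ interior D ∪ interior Dᶜ := by
    intro z hz
    rw [← compl_frontier_eq_union_interior]
    exact fun hf => (Metric.disjoint_ball_infDist (s := frontier D) (x := y)).le_bot ⟨hz, hf⟩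
  have hdisj : Disjoint (interior D) (interior Dᶜ) :=
    Disjoint.mono interior_subset interior_subset disjoint_compl_right
  have hne : (ball y (rho D y) ∩ interior D).Nonempty :=
    ⟨y, mem_ball_self h, by rwa [hDopen.interior_eq]⟩
  have := hconn.subset_left_of_subset_union isOpen_interior isOpen_interior hdisj hsub hne
  exact this.trans interior_subset

theorem stmt3
    {d : ℕ} (hd : 2 ≤ d)
    {D : Set (EuclideanSpace ℝ (Fin d))} (hDopen : IsOpen D) (hDbdd : Bornology.IsBounded D)
    {α : ℝ} (hα0 : 0 < α) (hα2 : α < 2) (hαd : α < d)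
    {G : EuclideanSpace ℝ (Fin d) → EuclideanSpace ℝ (Fin d) → ℝ}
    (hGsymm : ∀ x y, G x y = G y x)
    (hGpos : ∀ x ∈ D, ∀ y ∈ D, x ≠ y → 0 < G x y)
    {C0 : ℝ} (hC0 : 1 ≤ C0)
    (hGup : ∀ x ∈ D, ∀ y ∈ D, x ≠ y → G x y ≤ C0 * dist x y ^ (α - d))
    (hGlow : ∀ x ∈ D, ∀ y ∈ D, x ≠ y → dist x y ≤ rho D y / 2 →
      C0⁻¹ * dist x y ^ (α - d) ≤ G x y)
    (hHarnack : ∀ L : ℝ, 0 < L → ∃ c > 0, ∀ y ∈ D, ∀ x1 ∈ D \ ball y (rho D y / 2),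
      ∀ x2 ∈ D \ ball y (rho D y / 2),
      dist x1 x2 ≤ L * min (rho D x1) (rho D x2) → G x2 y ≤ c * G x1 y)
 :
    ∀ c1 : ℝ, 0 < c1 → ∃ c > 0, ∀ x ∈ D, ∀ y ∈ D, x ≠ y →
      dist x y ≤ c1 * min (rho D x) (rho D y) → c * dist x y ^ (α - d) ≤ G x y := by
  intro c1 hc1
  have hC0pos : (0:ℝ) < C0 := lt_of_lt_of_le one_pos hC0
  set L : ℝ := 4 * c1 * max 1 c1 with hL
  have hLpos : 0 < L := by positivity
  obtain ⟨cL, hcLpos, hH⟩ := hHarnack L hLpos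
  refine ⟨min C0⁻¹ ((cL * C0)⁻¹), by positivity, ?_⟩
  intro x hx y hy hxy hdle
  have hdpos : 0 < dist x y := dist_pos.2 hxy
  have hrymin : dist x y ≤ c1 * rho D y :=
    hdle.trans (by nlinarith [min_le_right (rho D x) (rho D y)])
  have hrxmin : dist x y ≤ c1 * rho D x :=
    hdle.trans (by nlinarith [min_le_left (rho D x) (rho D y)])
  have hrypos : 0 < rho D y := by nlinarith
  have hrxpos : 0 < rho D x := by nlinarith
  have hpow : (0:ℝ) < dist x y ^ (α - d) := Real.rpow_pos_of_pos hdpos _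
  rcases le_or_gt (dist x y) (rho D y / 2) with hcase | hcase
  · -- near case: direct lower bound
    calc min C0⁻¹ ((cL * C0)⁻¹) * dist x y ^ (α - d)
        ≤ C0⁻¹ * dist x y ^ (α - d) := by
          apply mul_le_mul_of_nonneg_right (min_le_left _ _) hpow.le
      _ ≤ G x y := hGlow x hx y hy hxy hcase
  · -- far case: Harnack
    set r : ℝ := rho D y / 2 with hr
    have hrpos : 0 < r := by positivity
    set x2 : EuclideanSpace ℝ (Fin d) := y + EuclideanSpace.single (⟨0, by omega⟩ : Fin d) r
      with hx2def
    have hdist2 : dist x2 y = r := by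
      rw [hx2def, dist_self_add_left, EuclideanSpace.norm_single, Real.norm_eq_abs,
        abs_of_pos hrpos]
    have hx2D : x2 ∈ D := by
      apply ball_rho_subset hDopen hy
      rw [mem_ball, hdist2]
      rw [hr]; linarith
    have hx2ne : x2 ≠ y := by
      intro h; rw [h, dist_self] at hdist2; linarith
    have hx2mem : x2 ∈ D \ ball y (rho D y / 2) := ⟨hx2D, by simp [mem_ball, hdist2, hr]⟩
    have hxmem : x ∈ D \ ball y (rho D y / 2) := ⟨hx, by simp [mem_ball]; linarith⟩
    have hrho2 : r ≤ rho D x2 := by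
      have := Metric.infDist_le_infDist_add_dist (x := y) (y := x2) (s := frontier D)
      have h2 : dist y x2 = r := by rw [dist_comm]; exact hdist2
      simp only [rho] at *
      rw [h2] at this; linarith [this]
    -- distance condition
    have hdcond : dist x x2 ≤ L * min (rho D x) (rho D x2) := by
      have h1 : dist x x2 ≤ dist x y + r := by
        calc dist x x2 ≤ dist x y + dist y x2 := dist_triangle _ _ _
          _ = dist x y + r := by rw [dist_comm y x2, hdist2]
      have h2 : r < dist x y := hcase
      have hminx : dist x y / c1 ≤ rho D x := by
        rw [div_le_iff₀ hc1]; linarith [hrxmin]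
      have hmin : dist x y / (2 * c1) ≤ min (rho D x) (rho D x2) := by
        apply le_min
        · calc dist x y / (2 * c1) ≤ dist x y / c1 := by
                apply div_le_div_of_nonneg_left hdpos.le hc1; nlinarith
            _ ≤ rho D x := hminx
        · calc dist x y / (2 * c1) ≤ r := by
                rw [div_le_iff₀ (by positivity)]; rw [hr]; nlinarith [hrymin]
            _ ≤ rho D x2 := hrho2
      calc dist x x2 ≤ 2 * dist x y := by linarith
        _ = (4 * c1) * (dist x y / (2 * c1)) := by field_simp; ring
        _ ≤ (4 * c1) * min (rho D x) (rho D x2) := by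
            apply mul_le_mul_of_nonneg_left hmin (by positivity)
        _ ≤ L * min (rho D x) (rho D x2) := by
            apply mul_le_mul_of_nonneg_right _ (le_min hrxpos.le (hrpos.trans_le hrho2).le)
            rw [hL]; nlinarith [le_max_left (1:ℝ) c1]
    have hHar := hH y hy x hxmem x2 hx2mem hdcond
    -- lower bound for G x2 y
    have hlow2 : C0⁻¹ * r ^ (α - d) ≤ G x2 y := by
      have := hGlow x2 hx2D y hy hx2ne (by rw [hdist2])
      rwa [hdist2] at this
    have hrmono : dist x y ^ (α - d) ≤ r ^ (α - d) :=
      Real.rpow_le_rpow_of_nonpos hrpos hcase.le (by linarith)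
    -- combine
    have hGxypos : 0 < G x y := hGpos x hx y hy hxy
    have key : C0⁻¹ * dist x y ^ (α - d) ≤ cL * G x y := by
      calc C0⁻¹ * dist x y ^ (α - d) ≤ C0⁻¹ * r ^ (α - d) := by
            apply mul_le_mul_of_nonneg_left hrmono (by positivity)
        _ ≤ G x2 y := hlow2
        _ ≤ cL * G x y := hHar
    calc min C0⁻¹ ((cL * C0)⁻¹) * dist x y ^ (α - d)
        ≤ (cL * C0)⁻¹ * dist x y ^ (α - d) :=
          mul_le_mul_of_nonneg_right (min_le_right _ _) hpow.le
      _ = cL⁻¹ * (C0⁻¹ * dist x y ^ (α - d)) := by rw [mul_inv]; ring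
      _ ≤ cL⁻¹ * (cL * G x y) := mul_le_mul_of_nonneg_left key (by positivity)
      _ = G x y := by field_simp
end

section
/- Assume: (i) condition (C4): there is c > 1 such that G(x,z1)·G(y,z2) ≤ c·G(x,z2)·G(y,z1) whenever Q ∈ ∂D, r ∈ (0,R), x, y ∈ D \ closure(B(Q,r)) and z1, z2 ∈ D ∩ B(Q, r/4); (ii) the interior lower bound: for every c1 > 0 there is c > 0 such that G(x,y) ≥ c·|x-y|^{α-d} whenever x, y ∈ D satisfy 0 < |x-y| ≤ c1·min(ρ_D(x), ρ_D(y)). Then (Carleson's estimate) there exists a constant c > 1 such that for every Q ∈ ∂D, every r ∈ (0, κR/4), every y ∈ D \ closure(B(Q,4r)) and every x ∈ D ∩ B(Q,r): G(x,y) ≤ c·G(A_r(Q), y). -/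
open Metric Set MeasureTheory

/-! The reference point `w = A_s(Q)` at a scale `s ≍ r/κ` lies outside `B(Q, 4r)`, at distance
`≍ r` from both `x` and `A_r(Q)`, and both `w` and `A_r(Q)` are at distance `≳ κ r` from `∂D`.
Condition (C4) at radius `4r`, applied to the far points `y, w` and the near points `x, A_r(Q)`,
gives `G(x,y) G(w,A_r(Q)) ≤ c G(A_r(Q),y) G(w,x)`. The interior lower bound makes
`G(w,A_r(Q)) ≳ r^{α-d}` and the upper bound makes `G(w,x) ≲ r^{α-d}`; the powers of `r` cancel. -/

theorem le_div_mul_of_mul_le {𝕜 : Type*} [Field 𝕜] [LinearOrder 𝕜] [IsStrictOrderedRing 𝕜]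
    {a b c e f m M : 𝕜} (h : a * b ≤ c * (e * f)) (ha : 0 ≤ a) (hce : 0 ≤ c * e) (hm : 0 < m)
    (hmb : m ≤ b) (hfM : f ≤ M) : a ≤ c * M / m * e := by
  rw [div_mul_eq_mul_div, le_div_iff₀ hm]
  calc a * m ≤ a * b := mul_le_mul_of_nonneg_left hmb ha
    _ ≤ c * (e * f) := h
    _ = c * e * f := by ring
    _ ≤ c * e * M := mul_le_mul_of_nonneg_left hfM hce
    _ = c * M * e := by ring

theorem Real.mul_rpow_div_mul_rpow {a b r : ℝ} (ha : 0 ≤ a) (hb : 0 ≤ b) (hr : 0 < r) (p : ℝ) :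
    (a * r) ^ p / (b * r) ^ p = (a / b) ^ p := by
  rw [← Real.div_rpow (by positivity) (by positivity), mul_div_mul_right _ _ hr.ne']

theorem exists_scale_between {κ r R : ℝ} (hκ : 0 < κ) (hr : 0 < r) (h : 4 * r < κ * R) :
    ∃ s, 4 * r < κ * s ∧ κ * s ≤ 5 * r ∧ s < R := by
  set t := min (5 * r) ((4 * r + κ * R) / 2)
  have ht : κ * (t / κ) = t := mul_div_cancel₀ t hκ.ne'
  refine ⟨t / κ, ?_, ?_, ?_⟩
  · rw [ht]; exact lt_min (by linarith) (by linarith)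
  · rw [ht]; exact min_le_left _ _
  · rw [div_lt_iff₀ hκ]; linarith [min_le_right (5 * r) ((4 * r + κ * R) / 2)]

section Fat

variable {X : Type*} [MetricSpace X]

def IsFatPoint (D : Set X) (κ : ℝ) (Q a : X) (s : ℝ) : Prop :=
  ball a (κ * s) ⊆ D ∩ ball Q s

variable {D : Set X}

theorem IsOpen.le_infDist_frontier (hD : IsOpen D) (hne : (frontier D).Nonempty)
    {a : X} {ε : ℝ} (h : ball a ε ⊆ D) : ε ≤ infDist a (frontier D) :=
  (le_infDist hne).2 fun _ hz => not_lt.1 fun hlt => (hD.frontier_eq ▸ hz).2 (h (mem_ball'.2 hlt))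

namespace IsFatPoint

variable {κ s : ℝ} {Q a : X}

theorem le_infDist_frontier (h : IsFatPoint D κ Q a s) (hD : IsOpen D) (hQ : Q ∈ frontier D) :
    κ * s ≤ infDist a (frontier D) :=
  hD.le_infDist_frontier ⟨Q, hQ⟩ (h.trans inter_subset_left)

theorem dist_lt (h : IsFatPoint D κ Q a s) (hκs : 0 < κ * s) : dist a Q < s :=
  (h (mem_ball_self hκs)).2

end IsFatPoint

theorem exists_reference_point (hD : IsOpen D) {Q : X} (hQ : Q ∈ frontier D)
    {κ R r : ℝ} (hκ : 0 < κ) (hr : 0 < r) (hrR : 4 * r < κ * R) {A : ℝ → X}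
    (hA : ∀ s, 0 < s → s < R → A s ∈ D ∧ IsFatPoint D κ Q (A s) s) :
    ∃ w ∈ D, 4 * r < infDist w (frontier D) ∧ dist w Q < 5 / κ * r := by
  obtain ⟨s, hs4, hs5, hsR⟩ := exists_scale_between hκ hr hrR
  have hκs : 0 < κ * s := by linarith
  obtain ⟨hwD, hw⟩ := hA s (pos_of_mul_pos_right hκs hκ.le) hsR
  refine ⟨A s, hwD, hs4.trans_le (hw.le_infDist_frontier hD hQ), (hw.dist_lt hκs).trans_le ?_⟩
  rwa [div_mul_eq_mul_div, le_div_iff₀ hκ, mul_comm]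

variable {G : X → X → ℝ} {p C₀ c c₂ κ r : ℝ} {Q a w x y : X}

theorem green_le_mul_green_of_reference_point (hD : IsOpen D) (hQ : Q ∈ frontier D)
    (hGsymm : ∀ x y, G x y = G y x) (hGpos : ∀ x ∈ D, ∀ y ∈ D, x ≠ y → 0 < G x y)
    (hp : p ≤ 0) (hC₀ : 0 ≤ C₀) (hGup : ∀ x ∈ D, ∀ y ∈ D, x ≠ y → G x y ≤ C₀ * dist x y ^ p)
    (hκ : 0 < κ) (hκ4 : κ ≤ 4) (hc₂ : 0 < c₂)
    (hGint : ∀ x ∈ D, ∀ y ∈ D, x ≠ y →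
      dist x y ≤ (1 + 5 / κ) / κ * min (infDist x (frontier D)) (infDist y (frontier D)) →
      c₂ * dist x y ^ p ≤ G x y)
    (hc : 0 ≤ c) (hr : 0 < r)
    (hC4 : ∀ x ∈ D \ closure (ball Q (4 * r)), ∀ y ∈ D \ closure (ball Q (4 * r)),
      ∀ z1 ∈ D ∩ ball Q r, ∀ z2 ∈ D ∩ ball Q r, G x z1 * G y z2 ≤ c * (G x z2 * G y z1))
    (ha : a ∈ D) (haQ : IsFatPoint D κ Q a r)
    (hw : w ∈ D) (hwρ : 4 * r < infDist w (frontier D)) (hwQ : dist w Q < 5 / κ * r)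
    (hy : y ∈ D \ closure (ball Q (4 * r))) (hx : x ∈ D ∩ ball Q r) :
    G x y ≤ c * C₀ / c₂ * (3 / (1 + 5 / κ)) ^ p * G a y := by
  set L := 1 + 5 / κ with hLdef
  have hL : 0 < L := by positivity
  have hnear : ball Q r ⊆ closure (ball Q (4 * r)) :=
    (ball_subset_ball (by linarith)).trans subset_closure
  have haQ' : dist a Q < r := haQ.dist_lt (by positivity)
  have hQw : 4 * r < dist w Q := hwρ.trans_le (infDist_le_dist_of_mem hQ)
  have hw' : w ∈ D \ closure (ball Q (4 * r)) :=
    ⟨hw, fun h => (mem_closedBall.1 (closure_ball_subset_closedBall h)).not_gt hQw⟩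
  have hwx : 3 * r ≤ dist w x := by linarith [dist_triangle w x Q, mem_ball.1 hx.2]
  have haw : dist a w ≤ L * r := by
    linarith [dist_triangle a Q w, dist_comm w Q, show L * r = r + 5 / κ * r by rw [hLdef]; ring]
  have hlow : c₂ * (L * r) ^ p ≤ G w a := by
    have hρ : κ * r ≤ min (infDist a (frontier D)) (infDist w (frontier D)) :=
      le_min (haQ.le_infDist_frontier hD hQ) (by nlinarith)
    have haw' : dist a w ≤ L / κ * min (infDist a (frontier D)) (infDist w (frontier D)) :=
      haw.trans (by rw [div_mul_comm, mul_comm]; gcongr; rwa [le_div_iff₀ hκ, mul_comm])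
    have haw_ne : a ≠ w := ne_of_mem_of_not_mem (hnear haQ') hw'.2
    rw [hGsymm]
    refine le_trans ?_ (hGint a ha w hw haw_ne haw')
    exact mul_le_mul_of_nonneg_left
      (Real.rpow_le_rpow_of_nonpos (dist_pos.2 haw_ne) haw hp) hc₂.le
  have hup : G w x ≤ C₀ * (3 * r) ^ p := by
    refine (hGup w hw x hx.1 (ne_of_mem_of_not_mem (hnear hx.2) hw'.2).symm).trans ?_
    exact mul_le_mul_of_nonneg_left (Real.rpow_le_rpow_of_nonpos (by positivity) hwx hp) hC₀
  have key := hC4 y hy w hw' x hx a ⟨ha, haQ'⟩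
  rw [hGsymm y x, hGsymm y a] at key
  have hK : c * (C₀ * (3 * r) ^ p) / (c₂ * (L * r) ^ p) = c * C₀ / c₂ * (3 / L) ^ p := by
    rw [← Real.mul_rpow_div_mul_rpow (by norm_num) hL.le hr]
    ring
  rw [← hK]
  refine le_div_mul_of_mul_le key
    (hGpos x hx.1 y hy.1 (ne_of_mem_of_not_mem (hnear hx.2) hy.2)).le
    (mul_nonneg hc (hGpos a ha y hy.1 (ne_of_mem_of_not_mem (hnear haQ') hy.2)).le)
    (mul_pos hc₂ (Real.rpow_pos_of_pos (mul_pos hL hr) p)) hlow hup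

end Fat

theorem stmt4_general
    {d : ℕ}
    {D : Set (EuclideanSpace ℝ (Fin d))} (hDopen : IsOpen D)
    {κ R : ℝ} (hκ0 : 0 < κ) (hκ2 : κ ≤ 1 / 2)
    {A : EuclideanSpace ℝ (Fin d) → ℝ → EuclideanSpace ℝ (Fin d)}
    (hfat : ∀ Q ∈ frontier D, ∀ r : ℝ, 0 < r → r < R →
      A Q r ∈ D ∧ ball (A Q r) (κ * r) ⊆ D ∩ ball Q r)
    {α : ℝ} (hαd : α < d)
    {G : EuclideanSpace ℝ (Fin d) → EuclideanSpace ℝ (Fin d) → ℝ}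
    (hGsymm : ∀ x y, G x y = G y x)
    (hGpos : ∀ x ∈ D, ∀ y ∈ D, x ≠ y → 0 < G x y)
    {C0 : ℝ} (hC0 : 1 ≤ C0)
    (hGup : ∀ x ∈ D, ∀ y ∈ D, x ≠ y → G x y ≤ C0 * dist x y ^ (α - d))
    (hC4 : ∃ c > 1, ∀ Q ∈ frontier D, ∀ r : ℝ, 0 < r → r < R →
      ∀ x ∈ D \ closure (ball Q r), ∀ y ∈ D \ closure (ball Q r),
      ∀ z1 ∈ D ∩ ball Q (r / 4), ∀ z2 ∈ D ∩ ball Q (r / 4),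
      G x z1 * G y z2 ≤ c * (G x z2 * G y z1))
    (hint : ∀ c1 : ℝ, 0 < c1 → ∃ c > 0, ∀ x ∈ D, ∀ y ∈ D, x ≠ y →
      dist x y ≤ c1 * min (rho D x) (rho D y) → c * dist x y ^ (α - d) ≤ G x y)
 :
    ∃ c > 1, ∀ Q ∈ frontier D, ∀ r : ℝ, 0 < r → r < κ * R / 4 →
      ∀ y ∈ D \ closure (ball Q (4 * r)), ∀ x ∈ D ∩ ball Q r,
      G x y ≤ c * G (A Q r) y := by
  obtain ⟨c, hc1, hc⟩ := hC4
  obtain ⟨c₂, hc₂, hGint⟩ := hint ((1 + 5 / κ) / κ) (by positivity)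
  set K := c * C0 / c₂ * (3 / (1 + 5 / κ)) ^ (α - d)
  refine ⟨max K 2, one_lt_two.trans_le (le_max_right _ _), fun Q hQ r hr hrR y hy x hx => ?_⟩
  have h4rR : 4 * r < κ * R := by linarith
  obtain ⟨haD, ha : IsFatPoint D κ Q (A Q r) r⟩ := hfat Q hQ r hr (by nlinarith)
  obtain ⟨w, hwD, hwρ, hwQ⟩ := exists_reference_point hDopen hQ hκ0 hr h4rR (hfat Q hQ)
  have hC4r := hc Q hQ (4 * r) (by positivity) (by nlinarith)
  simp only [mul_div_cancel_left₀ r (four_ne_zero' ℝ)] at hC4r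
  have hay : A Q r ∈ closure (ball Q (4 * r)) :=
    subset_closure (ball_subset_ball (by linarith) (ha.dist_lt (by positivity)))
  calc G x y ≤ K * G (A Q r) y :=
        green_le_mul_green_of_reference_point hDopen hQ hGsymm hGpos (by linarith) (by linarith)
          hGup hκ0 (by linarith) hc₂ hGint (by linarith) hr hC4r haD ha hwD hwρ hwQ hy hx
    _ ≤ max K 2 * G (A Q r) y := mul_le_mul_of_nonneg_right (le_max_left _ _)
        (hGpos _ haD _ hy.1 (ne_of_mem_of_not_mem hay hy.2)).le

/-- Carleson's estimate. -/
theorem stmt4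
    {d : ℕ} (hd : 2 ≤ d)
    {D : Set (EuclideanSpace ℝ (Fin d))} (hDopen : IsOpen D) (hDbdd : Bornology.IsBounded D)
    {κ R : ℝ} (hκ0 : 0 < κ) (hκ2 : κ ≤ 1 / 2) (hR : 0 < R)
    {A : EuclideanSpace ℝ (Fin d) → ℝ → EuclideanSpace ℝ (Fin d)}
    (hfat : ∀ Q ∈ frontier D, ∀ r : ℝ, 0 < r → r < R →
      A Q r ∈ D ∧ ball (A Q r) (κ * r) ⊆ D ∩ ball Q r)
    {α : ℝ} (hα0 : 0 < α) (hα2 : α < 2) (hαd : α < d)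
    {G : EuclideanSpace ℝ (Fin d) → EuclideanSpace ℝ (Fin d) → ℝ}
    (hGsymm : ∀ x y, G x y = G y x)
    (hGpos : ∀ x ∈ D, ∀ y ∈ D, x ≠ y → 0 < G x y)
    {C0 : ℝ} (hC0 : 1 ≤ C0)
    (hGup : ∀ x ∈ D, ∀ y ∈ D, x ≠ y → G x y ≤ C0 * dist x y ^ (α - d))
    (hGlow : ∀ x ∈ D, ∀ y ∈ D, x ≠ y → dist x y ≤ rho D y / 2 →
      C0⁻¹ * dist x y ^ (α - d) ≤ G x y)
    (hC4 : ∃ c > 1, ∀ Q ∈ frontier D, ∀ r : ℝ, 0 < r → r < R →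
      ∀ x ∈ D \ closure (ball Q r), ∀ y ∈ D \ closure (ball Q r),
      ∀ z1 ∈ D ∩ ball Q (r / 4), ∀ z2 ∈ D ∩ ball Q (r / 4),
      G x z1 * G y z2 ≤ c * (G x z2 * G y z1))
    (hint : ∀ c1 : ℝ, 0 < c1 → ∃ c > 0, ∀ x ∈ D, ∀ y ∈ D, x ≠ y →
      dist x y ≤ c1 * min (rho D x) (rho D y) → c * dist x y ^ (α - d) ≤ G x y)
 :
    ∃ c > 1, ∀ Q ∈ frontier D, ∀ r : ℝ, 0 < r → r < κ * R / 4 →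
      ∀ y ∈ D \ closure (ball Q (4 * r)), ∀ x ∈ D ∩ ball Q r,
      G x y ≤ c * G (A Q r) y :=
  stmt4_general hDopen hκ0 hκ2 hfat hαd hGsymm hGpos hC0 hGup hC4 hint
end

section
/- Assume the Carleson estimate: there is c > 1 such that G(x,y) ≤ c·G(A_r(Q), y) whenever Q ∈ ∂D, r ∈ (0, κR/4), y ∈ D \ closure(B(Q,4r)) and x ∈ D ∩ B(Q,r). Then there exists a constant c > 0 such that for every x, y ∈ D with r(x,y) < ε1 and every z ∈ D ∩ B(Q_x, r(x,y)): g(z) ≤ c·g(A_{r(x,y)}(Q_x)). -/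
open Metric Set MeasureTheory

/-! Since `ρ_D(z0) > κR > 4r`, the pole `z0` lies outside `B(Q_x, 4r)` and differs from `z` and
`A_r(Q_x)`, so the Carleson estimate applies to `G(·, z0)`; truncating at `C1 ≥ 0` preserves it
because `c ≥ 1`. -/

section

variable {d : ℕ} {D : Set (EuclideanSpace ℝ (Fin d))} {Q w z : EuclideanSpace ℝ (Fin d)}

theorem ne_of_dist_lt_rho (hQ : Q ∈ frontier D) (hw : dist w Q < rho D z) : w ≠ z := by
  rintro rfl
  exact (infDist_le_dist_of_mem hQ).not_gt hw

theorem notMem_closure_ball_of_lt_rho {s : ℝ} (hQ : Q ∈ frontier D) (hs : s < rho D z) :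
    z ∉ closure (ball Q s) := fun hz =>
  ne_of_dist_lt_rho hQ (hs.trans_le' (closure_ball_subset_closedBall hz)) rfl

theorem gfun_le_mul_gfun {G : EuclideanSpace ℝ (Fin d) → EuclideanSpace ℝ (Fin d) → ℝ}
    {z0 : EuclideanSpace ℝ (Fin d)} {C1 c : ℝ} (hC1 : 0 ≤ C1) (hc : 1 ≤ c)
    (hz : z ≠ z0) (hw : w ≠ z0) (hG : G z z0 ≤ c * G w z0) :
    gfun G z0 C1 z ≤ c * gfun G z0 C1 w := by
  rw [gfun, gfun, if_neg hz, if_neg hw, mul_min_of_nonneg _ _ (zero_le_one.trans hc)]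
  exact min_le_min hG (le_mul_of_one_le_left hC1 hc)

end

theorem stmt5_general
    {d : ℕ}
    {D : Set (EuclideanSpace ℝ (Fin d))}
    {κ R : ℝ} (hκ0 : 0 < κ)
    {A : EuclideanSpace ℝ (Fin d) → ℝ → EuclideanSpace ℝ (Fin d)}
    (hfat : ∀ Q ∈ frontier D, ∀ r : ℝ, 0 < r → r < R →
      A Q r ∈ D ∧ ball (A Q r) (κ * r) ⊆ D ∩ ball Q r)
    {M ε1 : ℝ} (hM : M = 2 / κ) (hε1 : ε1 = R / (12 * M))
    {z0 : EuclideanSpace ℝ (Fin d)} (hz0D : z0 ∈ D)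
    (hz0l : 2 * R / M < rho D z0) (hz0u : rho D z0 < R)
    {α : ℝ}
    {G : EuclideanSpace ℝ (Fin d) → EuclideanSpace ℝ (Fin d) → ℝ}
    {C0 : ℝ} (hC0 : 1 ≤ C0)
    {C1 : ℝ} (hC1 : C1 = C0 * (2 : ℝ) ^ ((d : ℝ) - α) * rho D z0 ^ (α - d))
    {Qb : EuclideanSpace ℝ (Fin d) → EuclideanSpace ℝ (Fin d)}
    (hQb : ∀ x ∈ D, Qb x ∈ frontier D ∧ dist x (Qb x) = rho D x)
    (hCarl : ∃ c > 1, ∀ Q ∈ frontier D, ∀ r : ℝ, 0 < r → r < κ * R / 4 →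
      ∀ y ∈ D \ closure (ball Q (4 * r)), ∀ x ∈ D ∩ ball Q r, G x y ≤ c * G (A Q r) y)
 :
    ∃ c > 0, ∀ x ∈ D, ∀ y ∈ D, rxy D x y < ε1 →
      ∀ z ∈ D ∩ ball (Qb x) (rxy D x y),
        gfun G z0 C1 z ≤ c * gfun G z0 C1 (A (Qb x) (rxy D x y)) := by
  obtain ⟨c, hc1, hCar⟩ := hCarl
  refine ⟨c, by linarith, fun x hx y _ hrε z ⟨hzD, hzQ⟩ => ?_⟩
  set r := rxy D x y
  have hr0 : 0 < r := dist_nonneg.trans_lt hzQ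
  have hκR : κ * R < rho D z0 := by
    have : 2 * R / M = κ * R := by rw [hM]; field_simp
    linarith
  have hrκR : r < κ * R / 4 := by
    have : ε1 = κ * R / 24 := by rw [hε1, hM]; field_simp; ring
    linarith
  have hC1_nonneg : 0 ≤ C1 := by
    have : 0 ≤ rho D z0 := infDist_nonneg
    rw [hC1]
    positivity
  obtain ⟨hQ, -⟩ := hQb x hx
  have hAQ : dist (A (Qb x) r) (Qb x) < r :=
    ((hfat (Qb x) hQ r hr0 (by linarith)).2 (mem_ball_self (mul_pos hκ0 hr0))).2
  have hz0far : z0 ∈ D \ closure (ball (Qb x) (4 * r)) :=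
    ⟨hz0D, notMem_closure_ball_of_lt_rho hQ (by linarith)⟩
  exact gfun_le_mul_gfun hC1_nonneg hc1.le
    (ne_of_dist_lt_rho hQ ((mem_ball.1 hzQ).trans (by linarith)))
    (ne_of_dist_lt_rho hQ (by linarith)) (hCar (Qb x) hQ r hr0 hrκR z0 hz0far z ⟨hzD, hzQ⟩)

theorem stmt5
    {d : ℕ} (hd : 2 ≤ d)
    {D : Set (EuclideanSpace ℝ (Fin d))} (hDopen : IsOpen D) (hDbdd : Bornology.IsBounded D)
    {κ R : ℝ} (hκ0 : 0 < κ) (hκ2 : κ ≤ 1 / 2) (hR : 0 < R)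
    {A : EuclideanSpace ℝ (Fin d) → ℝ → EuclideanSpace ℝ (Fin d)}
    (hfat : ∀ Q ∈ frontier D, ∀ r : ℝ, 0 < r → r < R →
      A Q r ∈ D ∧ ball (A Q r) (κ * r) ⊆ D ∩ ball Q r)
    {M ε1 : ℝ} (hM : M = 2 / κ) (hε1 : ε1 = R / (12 * M))
    {z0 : EuclideanSpace ℝ (Fin d)} (hz0D : z0 ∈ D)
    (hz0l : 2 * R / M < rho D z0) (hz0u : rho D z0 < R)
    {α : ℝ} (hα0 : 0 < α) (hα2 : α < 2) (hαd : α < d)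
    {G : EuclideanSpace ℝ (Fin d) → EuclideanSpace ℝ (Fin d) → ℝ}
    (hGsymm : ∀ x y, G x y = G y x)
    (hGpos : ∀ x ∈ D, ∀ y ∈ D, x ≠ y → 0 < G x y)
    {C0 : ℝ} (hC0 : 1 ≤ C0)
    (hGup : ∀ x ∈ D, ∀ y ∈ D, x ≠ y → G x y ≤ C0 * dist x y ^ (α - d))
    (hGlow : ∀ x ∈ D, ∀ y ∈ D, x ≠ y → dist x y ≤ rho D y / 2 →
      C0⁻¹ * dist x y ^ (α - d) ≤ G x y)
    {C1 : ℝ} (hC1 : C1 = C0 * (2 : ℝ) ^ ((d : ℝ) - α) * rho D z0 ^ (α - d))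
    {Qb : EuclideanSpace ℝ (Fin d) → EuclideanSpace ℝ (Fin d)}
    (hQb : ∀ x ∈ D, Qb x ∈ frontier D ∧ dist x (Qb x) = rho D x)
    (hCarl : ∃ c > 1, ∀ Q ∈ frontier D, ∀ r : ℝ, 0 < r → r < κ * R / 4 →
      ∀ y ∈ D \ closure (ball Q (4 * r)), ∀ x ∈ D ∩ ball Q r, G x y ≤ c * G (A Q r) y)
 :
    ∃ c > 0, ∀ x ∈ D, ∀ y ∈ D, rxy D x y < ε1 →
      ∀ z ∈ D ∩ ball (Qb x) (rxy D x y),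
        gfun G z0 C1 z ≤ c * gfun G z0 C1 (A (Qb x) (rxy D x y)) :=
  stmt5_general hκ0 hfat hM hε1 hz0D hz0l hz0u hC0 hC1 hQb hCarl
end

section
/- Assume: (i) there is c > 0 such that for every x, y ∈ D with r(x,y) < ε1, g(z) ≤ c·g(A_{r(x,y)}(Q_x)) for all z ∈ D ∩ B(Q_x, r(x,y)), and g(z) ≤ c·g(A_{r(x,y)}(Q_y)) for all z ∈ D ∩ B(Q_y, r(x,y)); (ii) the comparability of g on 𝓑: there is c ≥ 1 such that g(A1) ≤ c·g(A2) for all x, y ∈ D and A1, A2 ∈ 𝓑(x,y). Then there exists a constant c > 0 such that for every x, y ∈ D and every A ∈ 𝓑(x,y): max(g(x), g(y)) ≤ c·g(A). -/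
open Metric Set MeasureTheory

set_option maxHeartbeats 1000000 in
theorem stmt6
    {d : ℕ} (hd : 2 ≤ d)
    {D : Set (EuclideanSpace ℝ (Fin d))} (hDopen : IsOpen D) (hDbdd : Bornology.IsBounded D)
    {κ R : ℝ} (hκ0 : 0 < κ) (hκ2 : κ ≤ 1 / 2) (hR : 0 < R)
    {A : EuclideanSpace ℝ (Fin d) → ℝ → EuclideanSpace ℝ (Fin d)}
    (hfat : ∀ Q ∈ frontier D, ∀ r : ℝ, 0 < r → r < R →
      A Q r ∈ D ∧ ball (A Q r) (κ * r) ⊆ D ∩ ball Q r)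
    {M ε1 : ℝ} (hM : M = 2 / κ) (hε1 : ε1 = R / (12 * M))
    {z0 : EuclideanSpace ℝ (Fin d)} (hz0D : z0 ∈ D)
    (hz0l : 2 * R / M < rho D z0) (hz0u : rho D z0 < R)
    {α : ℝ} (hα0 : 0 < α) (hα2 : α < 2) (hαd : α < d)
    {G : EuclideanSpace ℝ (Fin d) → EuclideanSpace ℝ (Fin d) → ℝ}
    (hGsymm : ∀ x y, G x y = G y x)
    (hGpos : ∀ x ∈ D, ∀ y ∈ D, x ≠ y → 0 < G x y)
    {C0 : ℝ} (hC0 : 1 ≤ C0)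
    (hGup : ∀ x ∈ D, ∀ y ∈ D, x ≠ y → G x y ≤ C0 * dist x y ^ (α - d))
    (hGlow : ∀ x ∈ D, ∀ y ∈ D, x ≠ y → dist x y ≤ rho D y / 2 →
      C0⁻¹ * dist x y ^ (α - d) ≤ G x y)
    {C1 : ℝ} (hC1 : C1 = C0 * (2 : ℝ) ^ ((d : ℝ) - α) * rho D z0 ^ (α - d))
    {Qb : EuclideanSpace ℝ (Fin d) → EuclideanSpace ℝ (Fin d)}
    (hQb : ∀ x ∈ D, Qb x ∈ frontier D ∧ dist x (Qb x) = rho D x)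
    (hbd : ∃ c > 0, ∀ x ∈ D, ∀ y ∈ D, rxy D x y < ε1 →
      (∀ z ∈ D ∩ ball (Qb x) (rxy D x y),
        gfun G z0 C1 z ≤ c * gfun G z0 C1 (A (Qb x) (rxy D x y))) ∧
      (∀ z ∈ D ∩ ball (Qb y) (rxy D x y),
        gfun G z0 C1 z ≤ c * gfun G z0 C1 (A (Qb y) (rxy D x y))))
    (hcomp : ∃ c ≥ 1, ∀ x ∈ D, ∀ y ∈ D, ∀ A1 ∈ BB D M ε1 z0 x y, ∀ A2 ∈ BB D M ε1 z0 x y,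
      gfun G z0 C1 A1 ≤ c * gfun G z0 C1 A2)
 :
    ∃ c > 0, ∀ x ∈ D, ∀ y ∈ D, ∀ A' ∈ BB D M ε1 z0 x y,
      max (gfun G z0 C1 x) (gfun G z0 C1 y) ≤ c * gfun G z0 C1 A' := by
  obtain ⟨cb, hcb, hbd⟩ := hbd
  obtain ⟨cc, hcc, hcomp⟩ := hcomp
  have hMpos : 0 < M := by rw [hM]; positivity
  have hM4 : (4:ℝ) ≤ M := by
    rw [hM, le_div_iff₀ hκ0]; linarith
  have hκM : κ * M = 2 := by rw [hM]; field_simp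
  -- frontier is nonempty
  haveI : Nonempty (Fin d) := ⟨⟨0, by omega⟩⟩
  have hfront : (frontier D).Nonempty := by
    rcases eq_empty_or_nonempty (frontier D) with h | h
    · exfalso
      have hcl : IsClopen D := isClopen_iff_frontier_eq_empty.mpr h
      rcases isClopen_iff.mp hcl with h1 | h1
      · exact absurd (h1 ▸ hz0D) (notMem_empty z0)
      · exact NormedSpace.unbounded_univ ℝ (EuclideanSpace ℝ (Fin d)) (h1 ▸ hDbdd)
    · exact h
  have hρpos : ∀ x ∈ D, 0 < rho D x := by
    intro x hx
    have hxf : x ∉ frontier D := by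
      intro hxf
      rw [hDopen.frontier_eq] at hxf
      exact hxf.2 hx
    exact (isClosed_frontier.notMem_iff_infDist_pos hfront).mp hxf
  have hρz0 : 0 < rho D z0 := hρpos z0 hz0D
  have hC1pos : 0 < C1 := by
    rw [hC1]
    have h1 : (0:ℝ) < (2:ℝ) ^ ((d:ℝ) - α) := Real.rpow_pos_of_pos (by norm_num) _
    have h2 : (0:ℝ) < rho D z0 ^ (α - (d:ℝ)) := Real.rpow_pos_of_pos hρz0 _
    have h0 : (0:ℝ) < C0 := lt_of_lt_of_le one_pos hC0
    positivity
  have hgz0 : gfun G z0 C1 z0 = C1 := by simp [gfun]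
  have hgleC1 : ∀ x, gfun G z0 C1 x ≤ C1 := by
    intro x
    unfold gfun
    split
    · exact le_refl C1
    · exact min_le_right _ _
  have hgnn : ∀ x ∈ D, 0 ≤ gfun G z0 C1 x := by
    intro x hx
    unfold gfun
    split
    next => exact hC1pos.le
    next hxz => exact le_min (hGpos x hx z0 hz0D hxz).le hC1pos.le
  have hccnn : (0:ℝ) ≤ cc := le_trans zero_le_one hcc
  refine ⟨cc * (cb + 1), by positivity, ?_⟩
  intro x hx y hy A' hA'
  set r := rxy D x y with hrdef
  have hρxr : rho D x ≤ r := le_trans (le_max_left _ _) (le_max_left _ _)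
  have hρyr : rho D y ≤ r := le_trans (le_max_right _ _) (le_max_left _ _)
  have hdxyr : dist x y ≤ r := le_max_right _ _
  have hrpos : 0 < r := lt_of_lt_of_le (hρpos x hx) hρxr
  by_cases hre : r < ε1
  · -- main case
    have hBBmem : A' ∈ {A | A ∈ D ∧ r / M < rho D A ∧ max (dist x A) (dist y A) < 5 * r} := by
      have : BB D M ε1 z0 x y =
          {A | A ∈ D ∧ r / M < rho D A ∧ max (dist x A) (dist y A) < 5 * r} := by
        unfold BB; rw [if_pos hre]
      rwa [this] at hA'
    obtain ⟨hA'D, hA'ρ, hA'dist⟩ := hBBmem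
    have hgA'nn : 0 ≤ gfun G z0 C1 A' := hgnn A' hA'D
    have harith1 : ∀ t : ℝ, 0 ≤ t → cc * t ≤ cc * (cb + 1) * t := by
      intro t ht; nlinarith [mul_nonneg (mul_nonneg hccnn hcb.le) ht]
    have harith2 : ∀ t : ℝ, 0 ≤ t → cb * (cc * t) ≤ cc * (cb + 1) * t := by
      intro t ht; nlinarith [mul_nonneg hccnn ht]
    have hrR : r < R := by
      have : ε1 ≤ R / 48 := by
        rw [hε1]
        apply div_le_div_of_nonneg_left hR.le (by norm_num) (by linarith)
      have : r < R / 48 := lt_of_lt_of_le hre this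
      linarith
    -- key step for one point
    have key : ∀ u ∈ D, rho D u ≤ r → dist x u ≤ r → dist y u ≤ r →
        (∀ z ∈ D ∩ ball (Qb u) r, gfun G z0 C1 z ≤ cb * gfun G z0 C1 (A (Qb u) r)) →
        gfun G z0 C1 u ≤ cc * (cb + 1) * gfun G z0 C1 A' := by
      intro u hu hρur hdxu hdyu hbdu
      obtain ⟨hQf, hQd⟩ := hQb u hu
      rcases lt_or_eq_of_le hρur with hρlt | hρeq
      · -- u is close to the boundary: go through A (Qb u) r
        obtain ⟨hAD, hAball⟩ := hfat (Qb u) hQf r hrpos hrR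
        have hAQ : dist (A (Qb u) r) (Qb u) < r := by
          have : A (Qb u) r ∈ ball (Qb u) r :=
            (hAball (mem_ball_self (by positivity))).2
          exact mem_ball.mp this
        have hρA : κ * r ≤ rho D (A (Qb u) r) := by
          by_contra hcon
          push_neg at hcon
          obtain ⟨p, hp, hdp⟩ := (Metric.infDist_lt_iff hfront).mp hcon
          have hpD : p ∈ D := (hAball (mem_ball.mpr (by rw [dist_comm]; exact hdp))).1
          rw [hDopen.frontier_eq] at hp
          exact hp.2 hpD
        have hABB : A (Qb u) r ∈ BB D M ε1 z0 x y := by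
          unfold BB
          rw [if_pos hre]
          refine ⟨hAD, ?_, ?_⟩
          · have : r / M < κ * r := by
              rw [div_lt_iff₀ hMpos]
              nlinarith
            exact lt_of_lt_of_le this hρA
          · have hduA : dist u (A (Qb u) r) < 2 * r := by
              calc dist u (A (Qb u) r) ≤ dist u (Qb u) + dist (Qb u) (A (Qb u) r) :=
                    dist_triangle _ _ _
                _ < r + r := by rw [hQd, dist_comm (Qb u)]; exact add_lt_add_of_lt_of_lt hρlt hAQ
                _ = 2 * r := by ring
            have h1 : dist x (A (Qb u) r) < 5 * r := by
              calc dist x (A (Qb u) r) ≤ dist x u + dist u (A (Qb u) r) := dist_triangle _ _ _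
                _ < r + 2 * r := by linarith
                _ ≤ 5 * r := by linarith
            have h2 : dist y (A (Qb u) r) < 5 * r := by
              calc dist y (A (Qb u) r) ≤ dist y u + dist u (A (Qb u) r) := dist_triangle _ _ _
                _ < r + 2 * r := by linarith
                _ ≤ 5 * r := by linarith
            exact max_lt h1 h2
        have hgu : gfun G z0 C1 u ≤ cb * gfun G z0 C1 (A (Qb u) r) := by
          apply hbdu u ⟨hu, ?_⟩
          rw [mem_ball, hQd]; exact hρlt
        have hgA : gfun G z0 C1 (A (Qb u) r) ≤ cc * gfun G z0 C1 A' :=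
          hcomp x hx y hy _ hABB A' hA'
        calc gfun G z0 C1 u ≤ cb * gfun G z0 C1 (A (Qb u) r) := hgu
          _ ≤ cb * (cc * gfun G z0 C1 A') := by
              exact mul_le_mul_of_nonneg_left hgA hcb.le
          _ ≤ cc * (cb + 1) * gfun G z0 C1 A' := harith2 _ hgA'nn
      · -- u itself belongs to 𝓑(x,y)
        have huBB : u ∈ BB D M ε1 z0 x y := by
          unfold BB
          rw [if_pos hre]
          refine ⟨hu, ?_, ?_⟩
          · rw [hρeq, div_lt_iff₀ hMpos]
            nlinarith [hrpos]
          · exact max_lt (lt_of_le_of_lt hdxu (by linarith)) (lt_of_le_of_lt hdyu (by linarith))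
        have : gfun G z0 C1 u ≤ cc * gfun G z0 C1 A' := hcomp x hx y hy u huBB A' hA'
        calc gfun G z0 C1 u ≤ cc * gfun G z0 C1 A' := this
          _ ≤ cc * (cb + 1) * gfun G z0 C1 A' := harith1 _ hgA'nn
    obtain ⟨hbd1, hbd2⟩ := hbd x hx y hy hre
    exact max_le
      (key x hx hρxr (by rw [dist_self]; exact hrpos.le)
        (by rw [dist_comm]; exact hdxyr) hbd1)
      (key y hy hρyr hdxyr (by rw [dist_self]; exact hrpos.le) hbd2)
  · -- far case: A' = z0
    have hA'z0 : A' = z0 := by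
      have : BB D M ε1 z0 x y = {z0} := by unfold BB; rw [if_neg hre]
      rw [this] at hA'
      exact hA'
    subst hA'z0
    rw [hgz0]
    have h1c : (1:ℝ) ≤ cc * (cb + 1) := by
      have h := mul_le_mul_of_nonneg_left (by linarith : (1:ℝ) ≤ cb + 1) hccnn
      linarith
    have hone : C1 ≤ cc * (cb + 1) * C1 := le_mul_of_one_le_left hC1pos.le h1c
    exact max_le (le_trans (hgleC1 x) hone) (le_trans (hgleC1 y) hone)
end

section
/- Assume: (i) the Carleson estimate: there is c > 1 such that G(x,y) ≤ c·G(A_r(Q), y) whenever Q ∈ ∂D, r ∈ (0, κR/4), y ∈ D \ closure(B(Q,4r)) and x ∈ D ∩ B(Q,r); (ii) the Harnack condition: for every L > 0 there is a constant c(L) > 0 such that G(x2,y) ≤ c(L)·G(x1,y) whenever y ∈ D and x1, x2 ∈ D \ B(y, ρ_D(y)/2) satisfy |x1 - x2| ≤ L·min(ρ_D(x1), ρ_D(x2)); (iii) the comparability of g on 𝓑: there is c ≥ 1 such that g(A1) ≤ c·g(A2) for all x, y ∈ D and A1, A2 ∈ 𝓑(x,y). Then there exists a constant c > 0 such that for all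 x, y, z ∈ D with r(x,z) ≤ r(y,z) and all A_{x,y} ∈ 𝓑(x,y), A_{y,z} ∈ 𝓑(y,z): g(A_{x,y}) ≤ c·g(A_{y,z}). -/
/-
Write `r₁ = r(x,y)` and `r₂ = r(y,z)`; the triangle inequality turns `r(x,z) ≤ r(y,z)` into
`r₁ ≤ 2 r₂`. If `r₂ ≥ ε₁` then `A_{y,z} = z₀` and `g ≤ C₁ = g(z₀)`. Otherwise `A_{y,z}` lies at
distance `≍ r₂` from `∂D`, hence outside `B(z₀, ρ_D(z₀)/2)`, where the Harnack
condition applies to `G(·, z₀)`.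
* If `r₁ ≥ ε₁`, then `A_{x,y} = z₀` and we need `g(A_{y,z}) ≳ C₁`. Since `ρ_D(A_{y,z}) ≳ ε₁`, one
  Harnack step across `D` compares `A_{y,z}` with a point at distance `ρ_D(z₀)/2` from `z₀`, where
  the lower bound on `G` gives `G ≳ C₁`.
* If `r₁ ≤ r₂ < ε₁`, the Carleson estimate at the boundary point nearest to `y`, at radius `6 r₂`,
  bounds `G(A_{x,y}, z₀)` by the value at the fatness point, and a Harnack step at scale `r₂`
  compares that with `G(A_{y,z}, z₀)`.
* If `r₂ < r₁ ≤ 2 r₂`, a single Harnack step at scale `r₂` suffices.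
-/

open Metric Set MeasureTheory

section

variable {d : ℕ} {D : Set (EuclideanSpace ℝ (Fin d))}
  {x y z p q Q z0 : EuclideanSpace ℝ (Fin d)}
  {G : EuclideanSpace ℝ (Fin d) → EuclideanSpace ℝ (Fin d) → ℝ}

theorem rho_nonneg : 0 ≤ rho D x := infDist_nonneg

theorem rho_le_rho_add_dist (x y : EuclideanSpace ℝ (Fin d)) : rho D x ≤ rho D y + dist x y :=
  infDist_le_infDist_add_dist

theorem rho_le_dist_of_mem_frontier (hQ : Q ∈ frontier D) : rho D x ≤ dist x Q :=
  infDist_le_dist_of_mem hQ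

theorem frontier_nonempty_of_rho_pos (h : 0 < rho D x) : (frontier D).Nonempty := by
  by_contra hfr
  simp [rho, not_nonempty_iff_eq_empty.1 hfr] at h

theorem rho_pos_of_mem (hD : IsOpen D) (hfr : (frontier D).Nonempty) (hx : x ∈ D) :
    0 < rho D x :=
  (isClosed_frontier.notMem_iff_infDist_pos hfr).1 fun h => (hD.frontier_eq ▸ h).2 hx

theorem ball_rho_subset_s7 (hfr : (frontier D).Nonempty) (hx : x ∈ D) : ball x (rho D x) ⊆ D := by
  have hD : D ≠ univ := by rintro rfl; simp at hfr
  obtain ⟨Q, hQ, hQx⟩ := exists_mem_frontier_infDist_compl_eq_dist hx hD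
  exact (ball_subset_ball (hQx ▸ rho_le_dist_of_mem_frontier hQ)).trans ball_infDist_compl_subset

theorem le_rho_of_ball_subset (hD : IsOpen D) (hfr : (frontier D).Nonempty) {t : ℝ}
    (h : ball x t ⊆ D) : t ≤ rho D x := by
  by_contra! hlt
  obtain ⟨Q, hQ, hQx⟩ := (infDist_lt_iff hfr).1 hlt
  exact (hD.frontier_eq ▸ hQ).2 (h (mem_ball'.2 hQx))

theorem notMem_ball_half_rho (h : rho D x ≤ rho D z / 2) : x ∉ ball z (rho D z / 2) := by
  have := rho_le_rho_add_dist (D := D) z x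
  rw [mem_ball, not_lt, dist_comm]
  linarith

theorem ne_of_notMem_ball_half_rho (hD : IsOpen D) (hfr : (frontier D).Nonempty) (hz : z ∈ D)
    (hx : x ∉ ball z (rho D z / 2)) : x ≠ z := by
  rintro rfl
  exact hx (mem_ball_self (half_pos (rho_pos_of_mem hD hfr hz)))

theorem exists_dist_eq_half_rho (hD : IsOpen D) (hfr : (frontier D).Nonempty) (hz : z ∈ D) :
    ∃ x ∈ D, dist x z = rho D z / 2 ∧ rho D z / 2 ≤ rho D x := by
  obtain ⟨Q, hQ⟩ := hfr
  have : Nontrivial (EuclideanSpace ℝ (Fin d)) :=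
    ⟨⟨Q, z, by rintro rfl; exact (hD.frontier_eq ▸ hQ).2 hz⟩⟩
  have hρ := rho_pos_of_mem hD ⟨Q, hQ⟩ hz
  obtain ⟨x, hx⟩ := (NormedSpace.sphere_nonempty (x := z) (r := rho D z / 2)).2 (by positivity)
  rw [mem_sphere] at hx
  refine ⟨x, ball_rho_subset_s7 ⟨Q, hQ⟩ hz (by rw [mem_ball, hx]; linarith), hx, ?_⟩
  linarith [rho_le_rho_add_dist (D := D) z x, dist_comm x z]

def IsKappaFat (D : Set (EuclideanSpace ℝ (Fin d))) (κ R : ℝ)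
    (A : EuclideanSpace ℝ (Fin d) → ℝ → EuclideanSpace ℝ (Fin d)) : Prop :=
  ∀ Q ∈ frontier D, ∀ r : ℝ, 0 < r → r < R → A Q r ∈ D ∧ ball (A Q r) (κ * r) ⊆ D ∩ ball Q r

namespace IsKappaFat

variable {κ R r : ℝ} {A : EuclideanSpace ℝ (Fin d) → ℝ → EuclideanSpace ℝ (Fin d)}

theorem mem (h : IsKappaFat D κ R A) (hQ : Q ∈ frontier D) (hr : 0 < r) (hrR : r < R) :
    A Q r ∈ D :=
  (h Q hQ r hr hrR).1

theorem le_rho (h : IsKappaFat D κ R A) (hD : IsOpen D) (hQ : Q ∈ frontier D) (hr : 0 < r)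
    (hrR : r < R) : κ * r ≤ rho D (A Q r) :=
  le_rho_of_ball_subset hD ⟨Q, hQ⟩ ((h Q hQ r hr hrR).2.trans inter_subset_left)

theorem dist_lt (h : IsKappaFat D κ R A) (hκ : 0 < κ) (hQ : Q ∈ frontier D) (hr : 0 < r)
    (hrR : r < R) : dist (A Q r) Q < r :=
  ((h Q hQ r hr hrR).2 (mem_ball_self (by positivity))).2

end IsKappaFat

theorem rho_le_rxy_left : rho D x ≤ rxy D x y := (le_max_left _ _).trans (le_max_left _ _)

theorem rho_le_rxy_right : rho D y ≤ rxy D x y := (le_max_right _ _).trans (le_max_left _ _)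

theorem dist_le_rxy : dist x y ≤ rxy D x y := le_max_right _ _

theorem rxy_le_two_mul (h : rxy D x z ≤ rxy D y z) : rxy D x y ≤ 2 * rxy D y z := by
  have hx : rho D x ≤ rxy D x z := rho_le_rxy_left
  have hy : rho D y ≤ rxy D y z := rho_le_rxy_left
  have hxz : dist x z ≤ rxy D x z := dist_le_rxy
  have hyz : dist y z ≤ rxy D y z := dist_le_rxy
  have hy0 : 0 ≤ rho D y := rho_nonneg
  have := dist_triangle_right x y z
  exact max_le (max_le (by linarith) (by linarith)) (by linarith)

section BB

variable {M ε1 : ℝ} {A : EuclideanSpace ℝ (Fin d)}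

theorem mem_of_mem_BB (hz0 : z0 ∈ D) (hA : A ∈ BB D M ε1 z0 x y) : A ∈ D := by
  unfold BB at hA
  split_ifs at hA
  exacts [hA.1, (mem_singleton_iff.1 hA) ▸ hz0]

theorem eq_of_mem_BB (h : ε1 ≤ rxy D x y) (hA : A ∈ BB D M ε1 z0 x y) : A = z0 := by
  rwa [BB, if_neg h.not_gt] at hA

theorem mem_BB_of_lt {κ : ℝ} (hM : M = 2 / κ) (h : rxy D x y < ε1) (hA : A ∈ BB D M ε1 z0 x y) :
    A ∈ D ∧ κ * rxy D x y / 2 < rho D A ∧ rho D A < 6 * rxy D x y ∧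
      dist x A < 5 * rxy D x y ∧ dist y A < 5 * rxy D x y := by
  rw [BB, if_pos h] at hA
  obtain ⟨hAD, hρ, hdist⟩ := hA
  have hyA : dist y A < 5 * rxy D x y := (le_max_right _ _).trans_lt hdist
  refine ⟨hAD, by rwa [hM, div_div_eq_mul_div, mul_comm] at hρ, ?_,
    (le_max_left _ _).trans_lt hdist, hyA⟩
  linarith [rho_le_rho_add_dist (D := D) A y, dist_comm A y,
    rho_le_rxy_right (D := D) (x := x) (y := y)]

end BB

section gfun

variable {w w' : EuclideanSpace ℝ (Fin d)} {C1 k : ℝ}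

theorem gfun_self : gfun G z0 C1 z0 = C1 := if_pos rfl

theorem gfun_of_ne (hw : w ≠ z0) : gfun G z0 C1 w = min (G w z0) C1 := if_neg hw

theorem gfun_le : gfun G z0 C1 w ≤ C1 := by
  by_cases hw : w = z0
  · rw [hw, gfun_self]
  · rw [gfun_of_ne hw]; exact min_le_right _ _

theorem gfun_nonneg (hC1 : 0 ≤ C1) (hG : w ≠ z0 → 0 ≤ G w z0) : 0 ≤ gfun G z0 C1 w := by
  by_cases hw : w = z0
  · rw [hw, gfun_self]; exact hC1
  · rw [gfun_of_ne hw]; exact le_min (hG hw) hC1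

theorem gfun_le_mul_gfun_s7 (hC1 : 0 ≤ C1) (hk : 1 ≤ k) (hw : w ≠ z0) (hw' : w' ≠ z0)
    (h : G w z0 ≤ k * G w' z0) : gfun G z0 C1 w ≤ k * gfun G z0 C1 w' := by
  rw [gfun_of_ne hw, gfun_of_ne hw', mul_min_of_nonneg _ _ (zero_le_one.trans hk)]
  exact min_le_min h (le_mul_of_one_le_left hC1 hk)

theorem le_mul_gfun (hC1 : 0 ≤ C1) (hk : 1 ≤ k) (hw : w ≠ z0) (h : C1 ≤ k * G w z0) :
    C1 ≤ k * gfun G z0 C1 w := by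
  rw [gfun_of_ne hw, mul_min_of_nonneg _ _ (zero_le_one.trans hk)]
  exact le_min h (le_mul_of_one_le_left hC1 hk)

end gfun

def HarnackInequality (D : Set (EuclideanSpace ℝ (Fin d)))
    (G : EuclideanSpace ℝ (Fin d) → EuclideanSpace ℝ (Fin d) → ℝ) (L c : ℝ) : Prop :=
  ∀ y ∈ D, ∀ x1 ∈ D \ ball y (rho D y / 2), ∀ x2 ∈ D \ ball y (rho D y / 2),
    dist x1 x2 ≤ L * min (rho D x1) (rho D x2) → G x2 y ≤ c * G x1 y

def CarlesonEstimate (D : Set (EuclideanSpace ℝ (Fin d)))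
    (A : EuclideanSpace ℝ (Fin d) → ℝ → EuclideanSpace ℝ (Fin d))
    (G : EuclideanSpace ℝ (Fin d) → EuclideanSpace ℝ (Fin d) → ℝ) (r0 c : ℝ) : Prop :=
  ∀ Q ∈ frontier D, ∀ r : ℝ, 0 < r → r < r0 →
    ∀ y ∈ D \ closure (ball Q (4 * r)), ∀ x ∈ D ∩ ball Q r, G x y ≤ c * G (A Q r) y

namespace HarnackInequality

variable {L c s : ℝ}

theorem mono (hH : HarnackInequality D G L c) (hD : IsOpen D) (hfr : (frontier D).Nonempty)
    (hG : ∀ x ∈ D, ∀ y ∈ D, x ≠ y → 0 < G x y) {c' : ℝ} (hc : c ≤ c') :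
    HarnackInequality D G L c' := by
  intro y hy x1 hx1 x2 hx2 hdist
  exact (hH y hy x1 hx1 x2 hx2 hdist).trans (mul_le_mul_of_nonneg_right hc
    (hG x1 hx1.1 y hy (ne_of_notMem_ball_half_rho hD hfr hy hx1.2)).le)

theorem le_of_dist_le (hH : HarnackInequality D G L c) (hz0 : z0 ∈ D)
    (hp : p ∈ D \ ball z0 (rho D z0 / 2)) (hq : q ∈ D \ ball z0 (rho D z0 / 2))
    (hL : 0 ≤ L) (hsp : s ≤ rho D p) (hsq : s ≤ rho D q) (hdist : dist p q ≤ L * s) :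
    G q z0 ≤ c * G p z0 :=
  hH z0 hz0 p hp q hq (hdist.trans (mul_le_mul_of_nonneg_left (le_min hsp hsq) hL))

end HarnackInequality

theorem exists_harnackInequality_one_le
    (hHarnack : ∀ L : ℝ, 0 < L → ∃ c > 0, HarnackInequality D G L c) (hD : IsOpen D)
    (hfr : (frontier D).Nonempty) (hG : ∀ x ∈ D, ∀ y ∈ D, x ≠ y → 0 < G x y) {a b : ℝ}
    (ha : 0 < a) : ∃ L c, a ≤ L ∧ b ≤ L ∧ 1 ≤ c ∧ HarnackInequality D G L c := by
  obtain ⟨c, -, hH⟩ := hHarnack (max a b) (lt_max_of_lt_left ha)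
  exact ⟨max a b, max c 1, le_max_left _ _, le_max_right _ _, le_max_right _ _,
    hH.mono hD hfr hG (le_max_left _ _)⟩

theorem CarlesonEstimate.le_of_four_mul_lt_rho
    {A : EuclideanSpace ℝ (Fin d) → ℝ → EuclideanSpace ℝ (Fin d)} {r0 c r : ℝ}
    (hC : CarlesonEstimate D A G r0 c) (hQ : Q ∈ frontier D) (hr : 0 < r) (hr0 : r < r0)
    (hz0 : z0 ∈ D) (hrz0 : 4 * r < rho D z0) (hx : x ∈ D) (hxQ : dist x Q < r) :
    G x z0 ≤ c * G (A Q r) z0 := by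
  refine hC Q hQ r hr hr0 z0 ⟨hz0, fun hmem => ?_⟩ x ⟨hx, hxQ⟩
  have := mem_closedBall.1 (closure_ball_subset_closedBall hmem)
  linarith [rho_le_dist_of_mem_frontier (x := z0) hQ]

section Comparison

variable {Axy Ayz : EuclideanSpace ℝ (Fin d)} {κ R M ε1 L c C1 : ℝ}

theorem G_le_mul_G_of_comparable_scales {r r' : ℝ} (hH : HarnackInequality D G L c)
    (hκ : 0 < κ) (hL : 30 / κ ≤ L) (hz0 : z0 ∈ D)
    (hp : p ∈ D \ ball z0 (rho D z0 / 2)) (hq : q ∈ D \ ball z0 (rho D z0 / 2))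
    (hyp : dist y p < 5 * r) (hyq : dist y q < 5 * r') (hrr' : r ≤ 2 * r')
    (hρp : κ * r' / 2 ≤ rho D p) (hρq : κ * r' / 2 ≤ rho D q) :
    G p z0 ≤ c * G q z0 := by
  have hr' : 0 < r' := by linarith [dist_nonneg (x := y) (y := q)]
  have hL15 : 15 * r' ≤ L * (κ * r' / 2) := by
    calc 15 * r' = 30 / κ * (κ * r' / 2) := by field_simp; ring
      _ ≤ L * (κ * r' / 2) := by gcongr
  refine hH.le_of_dist_le hz0 hq hp ((div_pos (by norm_num) hκ).le.trans hL) hρq hρp ?_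
  linarith [dist_triangle_left q p y]

theorem G_le_mul_G_of_carleson {A : EuclideanSpace ℝ (Fin d) → ℝ → EuclideanSpace ℝ (Fin d)}
    {R cC r : ℝ} (hfat : IsKappaFat D κ R A) (hD : IsOpen D)
    (hC : CarlesonEstimate D A G (κ * R / 4) cC) (hcC : 0 ≤ cC) (hH : HarnackInequality D G L c)
    (hκ0 : 0 < κ) (hκ2 : κ ≤ 1 / 2) (hL : 30 / κ ≤ L) (hz0 : z0 ∈ D)
    (hr : 24 * r < κ * R) (hκR : κ * R ≤ rho D z0)
    (hQ : Q ∈ frontier D) (hyQ : dist y Q ≤ r) (hp : p ∈ D) (hyp : dist y p < 5 * r)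
    (hq : q ∈ D \ ball z0 (rho D z0 / 2)) (hyq : dist y q < 5 * r) (hρq : κ * r / 2 ≤ rho D q) :
    G p z0 ≤ cC * c * G q z0 := by
  have hr0 : 0 < r := by linarith [dist_nonneg (x := y) (y := p)]
  have h6R : 6 * r < R := by nlinarith
  have hBQ := hfat.dist_lt hκ0 hQ (by positivity) h6R
  have hB : A Q (6 * r) ∈ D \ ball z0 (rho D z0 / 2) :=
    ⟨hfat.mem hQ (by positivity) h6R,
      notMem_ball_half_rho (by linarith [rho_le_dist_of_mem_frontier (x := A Q (6 * r)) hQ])⟩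
  have hρB : κ * r / 2 ≤ rho D (A Q (6 * r)) := by
    nlinarith [hfat.le_rho hD hQ (by positivity) h6R]
  have hL15 : 15 * r ≤ L * (κ * r / 2) := by
    calc 15 * r = 30 / κ * (κ * r / 2) := by field_simp; ring
      _ ≤ L * (κ * r / 2) := by gcongr
  calc G p z0 ≤ cC * G (A Q (6 * r)) z0 :=
        hC.le_of_four_mul_lt_rho hQ (by positivity) (by linarith) hz0 (by linarith) hp
          (by linarith [dist_triangle_left p Q y])
    _ ≤ cC * (c * G q z0) := by
        refine mul_le_mul_of_nonneg_left
          (hH.le_of_dist_le hz0 hq hB ((div_pos (by norm_num) hκ0).le.trans hL) hρq hρB ?_) hcC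
        linarith [dist_triangle_left q Q y, dist_triangle q Q (A Q (6 * r)),
          dist_comm Q (A Q (6 * r))]
    _ = cC * c * G q z0 := by ring

theorem inv_mul_rpow_le_mul_G {α C0 m : ℝ} (hD : IsOpen D) (hDbdd : Bornology.IsBounded D)
    (hfr : (frontier D).Nonempty) (hz0 : z0 ∈ D)
    (hGlow : ∀ x ∈ D, ∀ y ∈ D, x ≠ y → dist x y ≤ rho D y / 2 →
      C0⁻¹ * dist x y ^ (α - d) ≤ G x y)
    (hH : HarnackInequality D G L c) (hL : 0 ≤ L) (hmz0 : m ≤ rho D z0 / 2) (hmL : diam D ≤ L * m)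
    (hq : q ∈ D \ ball z0 (rho D z0 / 2)) (hqm : m ≤ rho D q) :
    C0⁻¹ * (rho D z0 / 2) ^ (α - d) ≤ c * G q z0 := by
  obtain ⟨x, hx, hxz0, hρx⟩ := exists_dist_eq_half_rho hD hfr hz0
  have hxout : x ∉ ball z0 (rho D z0 / 2) := by rw [mem_ball, hxz0]; exact lt_irrefl _
  calc C0⁻¹ * (rho D z0 / 2) ^ (α - d) = C0⁻¹ * dist x z0 ^ (α - d) := by rw [hxz0]
    _ ≤ G x z0 := hGlow x hx z0 hz0 (ne_of_notMem_ball_half_rho hD hfr hz0 hxout) hxz0.le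
    _ ≤ c * G q z0 :=
        hH.le_of_dist_le hz0 hq ⟨hx, hxout⟩ hL hqm (hmz0.trans hρx)
          ((dist_le_diam_of_mem hDbdd hq.1 hx).trans hmL)

theorem gfun_le_mul_gfun_of_mem_BB {A : EuclideanSpace ℝ (Fin d) → ℝ → EuclideanSpace ℝ (Fin d)}
    {cC : ℝ} (hfat : IsKappaFat D κ R A) (hD : IsOpen D)
    (hC : CarlesonEstimate D A G (κ * R / 4) cC) (hcC : 1 ≤ cC) (hH : HarnackInequality D G L c)
    (hc : 1 ≤ c) (hG : ∀ x ∈ D, ∀ y ∈ D, x ≠ y → 0 < G x y) (hC1 : 0 ≤ C1)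
    (hκ0 : 0 < κ) (hκ2 : κ ≤ 1 / 2) (hL : 30 / κ ≤ L) (hz0 : z0 ∈ D)
    (hM : M = 2 / κ) (hε1 : 24 * ε1 = κ * R) (hκR : κ * R ≤ rho D z0)
    (hQ : Q ∈ frontier D) (hyQ : dist y Q = rho D y)
    (h12 : rxy D x y ≤ 2 * rxy D y z) (h1 : rxy D x y < ε1) (h2 : rxy D y z < ε1)
    (hAxy : Axy ∈ BB D M ε1 z0 x y) (hAyz : Ayz ∈ BB D M ε1 z0 y z) :
    gfun G z0 C1 Axy ≤ cC * c * gfun G z0 C1 Ayz := by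
  obtain ⟨hAxyD, hρAxy, hρAxy', -, hyAxy⟩ := mem_BB_of_lt hM h1 hAxy
  obtain ⟨hAyzD, hρAyz, hρAyz', hyAyz, -⟩ := mem_BB_of_lt hM h2 hAyz
  have hρz0 : 0 ≤ rho D z0 := rho_nonneg
  have hAyz0 : Ayz ∈ D \ ball z0 (rho D z0 / 2) := ⟨hAyzD, notMem_ball_half_rho (by linarith)⟩
  have hAxy0 : Axy ∈ D \ ball z0 (rho D z0 / 2) := ⟨hAxyD, notMem_ball_half_rho (by linarith)⟩
  have hne : ∀ w ∈ D \ ball z0 (rho D z0 / 2), w ≠ z0 := fun w hw =>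
    ne_of_notMem_ball_half_rho hD ⟨Q, hQ⟩ hz0 hw.2
  refine gfun_le_mul_gfun_s7 hC1 (one_le_mul_of_one_le_of_one_le hcC hc) (hne _ hAxy0) (hne _ hAyz0)
    ?_
  rcases le_or_gt (rxy D x y) (rxy D y z) with h | h
  · exact G_le_mul_G_of_carleson hfat hD hC (by linarith) hH hκ0 hκ2 hL hz0 (by linarith) hκR hQ
      (hyQ ▸ rho_le_rxy_left) hAxyD (by linarith) hAyz0 hyAyz hρAyz.le
  · calc G Axy z0 ≤ c * G Ayz z0 :=
          G_le_mul_G_of_comparable_scales hH hκ0 hL hz0 hAxy0 hAyz0 hyAxy hyAyz h12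
            (by nlinarith) hρAyz.le
      _ ≤ cC * (c * G Ayz z0) :=
          le_mul_of_one_le_left (by positivity [hG _ hAyzD _ hz0 (hne _ hAyz0)]) hcC
      _ = cC * c * G Ayz z0 := by ring

theorem self_le_mul_gfun_of_mem_BB {α C0 : ℝ} (hD : IsOpen D) (hDbdd : Bornology.IsBounded D)
    (hfr : (frontier D).Nonempty) (hz0 : z0 ∈ D)
    (hGlow : ∀ x ∈ D, ∀ y ∈ D, x ≠ y → dist x y ≤ rho D y / 2 →
      C0⁻¹ * dist x y ^ (α - d) ≤ G x y)
    (hH : HarnackInequality D G L c) (hc : 1 ≤ c) (hL : 0 ≤ L) (hLε1 : diam D ≤ L * (κ * ε1 / 4))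
    (hC0 : 1 ≤ C0) (hC1 : C1 = C0 * (2 : ℝ) ^ ((d : ℝ) - α) * rho D z0 ^ (α - d))
    (hκ0 : 0 < κ) (hM : M = 2 / κ) (hε1 : 24 * ε1 = κ * R) (hκR : κ * R ≤ rho D z0)
    (h1 : ε1 ≤ rxy D x y) (h12 : rxy D x y ≤ 2 * rxy D y z) (h2 : rxy D y z < ε1)
    (hAyz : Ayz ∈ BB D M ε1 z0 y z) :
    C1 ≤ C0 ^ 2 * c * gfun G z0 C1 Ayz := by
  obtain ⟨hAyzD, hρAyz, hρAyz', -, -⟩ := mem_BB_of_lt hM h2 hAyz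
  have hρz0 := rho_pos_of_mem hD hfr hz0
  have hAyz0 : Ayz ∈ D \ ball z0 (rho D z0 / 2) := ⟨hAyzD, notMem_ball_half_rho (by linarith)⟩
  have hlow := inv_mul_rpow_le_mul_G hD hDbdd hfr hz0 hGlow hH hL (by nlinarith) hLε1 hAyz0
    (by nlinarith)
  have hC1pos : 0 < C1 := by
    rw [hC1]
    have := Real.rpow_pos_of_pos hρz0 (α - d)
    positivity
  refine le_mul_gfun hC1pos.le (one_le_mul_of_one_le_of_one_le (one_le_pow₀ hC0) hc)
    (ne_of_notMem_ball_half_rho hD hfr hz0 hAyz0.2) ?_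
  calc C1 = C0 ^ 2 * (C0⁻¹ * (rho D z0 / 2) ^ (α - d)) := by
        rw [hC1, Real.div_rpow hρz0.le zero_le_two, ← neg_sub, Real.rpow_neg zero_le_two]
        field_simp
    _ ≤ C0 ^ 2 * (c * G Ayz z0) := by gcongr
    _ = C0 ^ 2 * c * G Ayz z0 := by ring

end Comparison

end

theorem stmt7_general
    {d : ℕ}
    {D : Set (EuclideanSpace ℝ (Fin d))} (hDopen : IsOpen D) (hDbdd : Bornology.IsBounded D)
    {κ R : ℝ} (hκ0 : 0 < κ) (hκ2 : κ ≤ 1 / 2) (hR : 0 < R)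
    {A : EuclideanSpace ℝ (Fin d) → ℝ → EuclideanSpace ℝ (Fin d)}
    (hfat : ∀ Q ∈ frontier D, ∀ r : ℝ, 0 < r → r < R →
      A Q r ∈ D ∧ ball (A Q r) (κ * r) ⊆ D ∩ ball Q r)
    {M ε1 : ℝ} (hM : M = 2 / κ) (hε1 : ε1 = R / (12 * M))
    {z0 : EuclideanSpace ℝ (Fin d)} (hz0D : z0 ∈ D)
    (hz0l : 2 * R / M < rho D z0)
    {α : ℝ}
    {G : EuclideanSpace ℝ (Fin d) → EuclideanSpace ℝ (Fin d) → ℝ}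
    (hGpos : ∀ x ∈ D, ∀ y ∈ D, x ≠ y → 0 < G x y)
    {C0 : ℝ} (hC0 : 1 ≤ C0)
    (hGlow : ∀ x ∈ D, ∀ y ∈ D, x ≠ y → dist x y ≤ rho D y / 2 →
      C0⁻¹ * dist x y ^ (α - d) ≤ G x y)
    {C1 : ℝ} (hC1 : C1 = C0 * (2 : ℝ) ^ ((d : ℝ) - α) * rho D z0 ^ (α - d))
    {Qb : EuclideanSpace ℝ (Fin d) → EuclideanSpace ℝ (Fin d)}
    (hQb : ∀ x ∈ D, Qb x ∈ frontier D ∧ dist x (Qb x) = rho D x)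
    (hCarl : ∃ c > 1, ∀ Q ∈ frontier D, ∀ r : ℝ, 0 < r → r < κ * R / 4 →
      ∀ y ∈ D \ closure (ball Q (4 * r)), ∀ x ∈ D ∩ ball Q r, G x y ≤ c * G (A Q r) y)
    (hHarnack : ∀ L : ℝ, 0 < L → ∃ c > 0, ∀ y ∈ D, ∀ x1 ∈ D \ ball y (rho D y / 2),
      ∀ x2 ∈ D \ ball y (rho D y / 2),
      dist x1 x2 ≤ L * min (rho D x1) (rho D x2) → G x2 y ≤ c * G x1 y)
 :
    ∃ c > 0, ∀ x ∈ D, ∀ y ∈ D, ∀ z ∈ D, rxy D x z ≤ rxy D y z →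
      ∀ Axy ∈ BB D M ε1 z0 x y, ∀ Ayz ∈ BB D M ε1 z0 y z,
      gfun G z0 C1 Axy ≤ c * gfun G z0 C1 Ayz := by
  obtain ⟨cC, hcC, hC⟩ := hCarl
  have hε1κR : 24 * ε1 = κ * R := by rw [hε1, hM]; field_simp; ring
  have hκRz0 : κ * R < rho D z0 := by rwa [hM, div_div_eq_mul_div, mul_assoc,
    mul_div_cancel_left₀ _ two_ne_zero, mul_comm] at hz0l
  have hfr : (frontier D).Nonempty := frontier_nonempty_of_rho_pos (by nlinarith)
  have hC1pos : 0 ≤ C1 := by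
    rw [hC1]
    have := Real.rpow_nonneg (rho_nonneg (D := D) (x := z0)) (α - d)
    positivity
  -- `30 / κ` covers the Harnack steps at scale `r₂`, the second term the step across `D`.
  obtain ⟨L, c, hL, hLD, hc, hH⟩ := exists_harnackInequality_one_le hHarnack hDopen hfr hGpos
    (a := 30 / κ) (b := diam D / (κ * ε1 / 4)) (by positivity)
  have hK : 1 ≤ cC * (C0 ^ 2 * c) :=
    one_le_mul_of_one_le_of_one_le hcC.le (one_le_mul_of_one_le_of_one_le (one_le_pow₀ hC0) hc)
  refine ⟨cC * (C0 ^ 2 * c), by positivity, ?_⟩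
  intro x hx y hy z hz hxz Axy hAxy Ayz hAyz
  have h12 := rxy_le_two_mul hxz
  have hgAyz : 0 ≤ gfun G z0 C1 Ayz :=
    gfun_nonneg hC1pos fun h => (hGpos _ (mem_of_mem_BB hz0D hAyz) _ hz0D h).le
  rcases le_or_gt ε1 (rxy D y z) with h2 | h2
  · rw [eq_of_mem_BB h2 hAyz, gfun_self]
    exact gfun_le.trans (le_mul_of_one_le_left hC1pos hK)
  rcases le_or_gt ε1 (rxy D x y) with h1 | h1
  · rw [eq_of_mem_BB h1 hAxy, gfun_self]
    refine (self_le_mul_gfun_of_mem_BB hDopen hDbdd hfr hz0D hGlow hH hc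
      ((by positivity : (0 : ℝ) ≤ 30 / κ).trans hL) ((div_le_iff₀ (by nlinarith)).1 hLD) hC0 hC1
      hκ0 hM hε1κR hκRz0.le h1 h12 h2 hAyz).trans (mul_le_mul_of_nonneg_right ?_ hgAyz)
    exact le_mul_of_one_le_left (by positivity) hcC.le
  · obtain ⟨hQ, hyQ⟩ := hQb y hy
    refine (gfun_le_mul_gfun_of_mem_BB hfat hDopen hC hcC.le hH hc hGpos hC1pos hκ0 hκ2 hL hz0D
      hM hε1κR hκRz0.le hQ hyQ h12 h1 h2 hAxy hAyz).trans (mul_le_mul_of_nonneg_right ?_ hgAyz)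
    exact mul_le_mul_of_nonneg_left (le_mul_of_one_le_left (by positivity) (one_le_pow₀ hC0))
      (by positivity)

theorem stmt7
    {d : ℕ} (hd : 2 ≤ d)
    {D : Set (EuclideanSpace ℝ (Fin d))} (hDopen : IsOpen D) (hDbdd : Bornology.IsBounded D)
    {κ R : ℝ} (hκ0 : 0 < κ) (hκ2 : κ ≤ 1 / 2) (hR : 0 < R)
    {A : EuclideanSpace ℝ (Fin d) → ℝ → EuclideanSpace ℝ (Fin d)}
    (hfat : ∀ Q ∈ frontier D, ∀ r : ℝ, 0 < r → r < R →
      A Q r ∈ D ∧ ball (A Q r) (κ * r) ⊆ D ∩ ball Q r)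
    {M ε1 : ℝ} (hM : M = 2 / κ) (hε1 : ε1 = R / (12 * M))
    {z0 : EuclideanSpace ℝ (Fin d)} (hz0D : z0 ∈ D)
    (hz0l : 2 * R / M < rho D z0) (hz0u : rho D z0 < R)
    {α : ℝ} (hα0 : 0 < α) (hα2 : α < 2) (hαd : α < d)
    {G : EuclideanSpace ℝ (Fin d) → EuclideanSpace ℝ (Fin d) → ℝ}
    (hGsymm : ∀ x y, G x y = G y x)
    (hGpos : ∀ x ∈ D, ∀ y ∈ D, x ≠ y → 0 < G x y)
    {C0 : ℝ} (hC0 : 1 ≤ C0)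
    (hGup : ∀ x ∈ D, ∀ y ∈ D, x ≠ y → G x y ≤ C0 * dist x y ^ (α - d))
    (hGlow : ∀ x ∈ D, ∀ y ∈ D, x ≠ y → dist x y ≤ rho D y / 2 →
      C0⁻¹ * dist x y ^ (α - d) ≤ G x y)
    {C1 : ℝ} (hC1 : C1 = C0 * (2 : ℝ) ^ ((d : ℝ) - α) * rho D z0 ^ (α - d))
    {Qb : EuclideanSpace ℝ (Fin d) → EuclideanSpace ℝ (Fin d)}
    (hQb : ∀ x ∈ D, Qb x ∈ frontier D ∧ dist x (Qb x) = rho D x)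
    (hCarl : ∃ c > 1, ∀ Q ∈ frontier D, ∀ r : ℝ, 0 < r → r < κ * R / 4 →
      ∀ y ∈ D \ closure (ball Q (4 * r)), ∀ x ∈ D ∩ ball Q r, G x y ≤ c * G (A Q r) y)
    (hHarnack : ∀ L : ℝ, 0 < L → ∃ c > 0, ∀ y ∈ D, ∀ x1 ∈ D \ ball y (rho D y / 2),
      ∀ x2 ∈ D \ ball y (rho D y / 2),
      dist x1 x2 ≤ L * min (rho D x1) (rho D x2) → G x2 y ≤ c * G x1 y)
    (hcomp : ∃ c ≥ 1, ∀ x ∈ D, ∀ y ∈ D, ∀ A1 ∈ BB D M ε1 z0 x y, ∀ A2 ∈ BB D M ε1 z0 x y,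
      gfun G z0 C1 A1 ≤ c * gfun G z0 C1 A2)
 :
    ∃ c > 0, ∀ x ∈ D, ∀ y ∈ D, ∀ z ∈ D, rxy D x z ≤ rxy D y z →
      ∀ Axy ∈ BB D M ε1 z0 x y, ∀ Ayz ∈ BB D M ε1 z0 y z,
      gfun G z0 C1 Axy ≤ c * gfun G z0 C1 Ayz :=
  stmt7_general hDopen hDbdd hκ0 hκ2 hR hfat hM hε1 hz0D hz0l hGpos hC0 hGlow hC1 hQb hCarl hHarnack
end

section
/- Assume there is a constant c0 > 0 such that for all x, y, z ∈ D with r(x,z) ≤ r(y,z) and all A_{x,y} ∈ 𝓑(x,y), A_{y,z} ∈ 𝓑(y,z): g(A_{x,y}) ≤ c0·g(A_{y,z}). Then there exists a constant c > 0 such that for all x, y, z, w ∈ D and all A_{x,y} ∈ 𝓑(x,y), A_{y,z} ∈ 𝓑(y,z), A_{z,w} ∈ 𝓑(z,w), A_{x,w} ∈ 𝓑(x,w): g(A_{x,w})² ≤ c·(g(A_{x,y})² + g(A_{y,z})² + g(A_{z,w})²). -/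
open Metric Set MeasureTheory

lemma rxy_symm {d : ℕ} (D : Set (EuclideanSpace ℝ (Fin d)))
    (x y : EuclideanSpace ℝ (Fin d)) : rxy D x y = rxy D y x := by
  simp [rxy, max_comm (rho D x), dist_comm]

lemma BB_symm {d : ℕ} (D : Set (EuclideanSpace ℝ (Fin d))) (M ε1 : ℝ)
    (z0 x y : EuclideanSpace ℝ (Fin d)) : BB D M ε1 z0 x y = BB D M ε1 z0 y x := by
  unfold BB
  rw [rxy_symm D x y]
  split_ifs with h
  · ext A
    constructor <;> rintro ⟨h1, h2, h3⟩ <;> exact ⟨h1, h2, by rwa [max_comm]⟩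
  · rfl

/-- Membership in `BB` implies membership in `D` or being `z0`. -/
lemma BB_mem_cases {d : ℕ} {D : Set (EuclideanSpace ℝ (Fin d))} {M ε1 : ℝ}
    {z0 x y A : EuclideanSpace ℝ (Fin d)} (h : A ∈ BB D M ε1 z0 x y) :
    A = z0 ∨ A ∈ D := by
  unfold BB at h
  split_ifs at h with hc
  · exact Or.inr h.1
  · exact Or.inl h

/-- Nonemptiness of `BB` for points of `D`. -/
lemma BB_ne {d : ℕ} (hd : 2 ≤ d)
    {D : Set (EuclideanSpace ℝ (Fin d))} (hDopen : IsOpen D) (hDbdd : Bornology.IsBounded D)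
    {κ R : ℝ} (hκ0 : 0 < κ) (hκ2 : κ ≤ 1 / 2) (hR : 0 < R)
    {A : EuclideanSpace ℝ (Fin d) → ℝ → EuclideanSpace ℝ (Fin d)}
    (hfat : ∀ Q ∈ frontier D, ∀ r : ℝ, 0 < r → r < R →
      A Q r ∈ D ∧ ball (A Q r) (κ * r) ⊆ D ∩ ball Q r)
    {M ε1 : ℝ} (hM : M = 2 / κ) (hε1 : ε1 = R / (12 * M))
    (z0 : EuclideanSpace ℝ (Fin d))
    {x y : EuclideanSpace ℝ (Fin d)} (hx : x ∈ D) (hy : y ∈ D) :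
    (BB D M ε1 z0 x y).Nonempty := by
  have hM0 : 0 < M := by rw [hM]; positivity
  unfold BB
  split_ifs with hc
  swap
  · exact ⟨z0, rfl⟩
  -- frontier is nonempty
  haveI : Nonempty (Fin d) := ⟨⟨0, by omega⟩⟩
  have hne : (frontier D).Nonempty := by
    by_contra hemp
    rw [not_nonempty_iff_eq_empty] at hemp
    have hcl : IsClopen D := isClopen_iff_frontier_eq_empty.2 hemp
    rcases isClopen_iff.1 hcl with h | h
    · exact (h ▸ hx : x ∈ (∅ : Set _))
    · exact NormedSpace.unbounded_univ ℝ (EuclideanSpace ℝ (Fin d)) (h ▸ hDbdd)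
  have hxfr : x ∉ frontier D := by
    rw [hDopen.frontier_eq]; exact fun h => h.2 hx
  have hrhox : 0 < rho D x :=
    (isClosed_frontier.notMem_iff_infDist_pos hne).1 hxfr
  set r := rxy D x y with hr
  have hr0 : 0 < r := lt_of_lt_of_le hrhox (le_trans (le_max_left _ _) (le_max_left _ _))
  have hrR : r < R := by
    have : ε1 ≤ R / 48 := by
      rw [hε1, hM]
      rw [div_le_div_iff₀ (by positivity) (by norm_num)]
      have h4 : (4 : ℝ) ≤ 2 / κ := by
        rw [le_div_iff₀ hκ0]; linarith
      nlinarith [hR.le]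
    linarith [hc, hR]
  -- nearest frontier point
  obtain ⟨Q, hQ, hQd⟩ := isClosed_frontier.exists_infDist_eq_dist hne x
  obtain ⟨hAD, hAball⟩ := hfat Q hQ r hr0 hrR
  refine ⟨A Q r, hAD, ?_, ?_⟩
  · -- rho (A Q r) ≥ κ r > r / M
    have hge : κ * r ≤ rho D (A Q r) := by
      by_contra hlt
      push_neg at hlt
      obtain ⟨p, hp, hpd⟩ := (infDist_lt_iff hne).1 hlt
      have : p ∈ D := (hAball (by rwa [mem_ball, dist_comm])).1
      rw [hDopen.frontier_eq] at hp
      exact hp.2 this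
    have : r / M < κ * r := by
      rw [hM, div_div_eq_mul_div, div_lt_iff₀ (by positivity)]
      nlinarith
    calc r / M < κ * r := this
    _ ≤ _ := hge
  · -- distances
    have hAQ : dist Q (A Q r) < r := by
      have : A Q r ∈ ball Q r := (hAball (mem_ball_self (by positivity))).2
      rwa [mem_ball, dist_comm] at this
    have hxQ : dist x Q ≤ r := by
      rw [← hQd]
      exact le_trans (le_max_left _ _) (le_max_left _ _)
    have hxA : dist x (A Q r) < 2 * r := by
      calc dist x (A Q r) ≤ dist x Q + dist Q (A Q r) := dist_triangle _ _ _
      _ < r + r := by linarith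
      _ = 2 * r := by ring
    have hyx : dist y x ≤ r := by rw [dist_comm]; exact le_max_right _ _
    have hyA : dist y (A Q r) < 3 * r := by
      calc dist y (A Q r) ≤ dist y x + dist x (A Q r) := dist_triangle _ _ _
      _ < r + 2 * r := by linarith
      _ = 3 * r := by ring
    exact max_lt (by linarith) (by linarith)

theorem stmt8
    {d : ℕ} (hd : 2 ≤ d)
    {D : Set (EuclideanSpace ℝ (Fin d))} (hDopen : IsOpen D) (hDbdd : Bornology.IsBounded D)
    {κ R : ℝ} (hκ0 : 0 < κ) (hκ2 : κ ≤ 1 / 2) (hR : 0 < R)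
    {A : EuclideanSpace ℝ (Fin d) → ℝ → EuclideanSpace ℝ (Fin d)}
    (hfat : ∀ Q ∈ frontier D, ∀ r : ℝ, 0 < r → r < R →
      A Q r ∈ D ∧ ball (A Q r) (κ * r) ⊆ D ∩ ball Q r)
    {M ε1 : ℝ} (hM : M = 2 / κ) (hε1 : ε1 = R / (12 * M))
    {z0 : EuclideanSpace ℝ (Fin d)} (hz0D : z0 ∈ D)
    (hz0l : 2 * R / M < rho D z0) (hz0u : rho D z0 < R)
    {α : ℝ} (hα0 : 0 < α) (hα2 : α < 2) (hαd : α < d)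
    {G : EuclideanSpace ℝ (Fin d) → EuclideanSpace ℝ (Fin d) → ℝ}
    (hGsymm : ∀ x y, G x y = G y x)
    (hGpos : ∀ x ∈ D, ∀ y ∈ D, x ≠ y → 0 < G x y)
    {C0 : ℝ} (hC0 : 1 ≤ C0)
    (hGup : ∀ x ∈ D, ∀ y ∈ D, x ≠ y → G x y ≤ C0 * dist x y ^ (α - d))
    (hGlow : ∀ x ∈ D, ∀ y ∈ D, x ≠ y → dist x y ≤ rho D y / 2 →
      C0⁻¹ * dist x y ^ (α - d) ≤ G x y)
    {C1 : ℝ} (hC1 : C1 = C0 * (2 : ℝ) ^ ((d : ℝ) - α) * rho D z0 ^ (α - d))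
    (hmono : ∃ c0 > 0, ∀ x ∈ D, ∀ y ∈ D, ∀ z ∈ D, rxy D x z ≤ rxy D y z →
      ∀ Axy ∈ BB D M ε1 z0 x y, ∀ Ayz ∈ BB D M ε1 z0 y z,
      gfun G z0 C1 Axy ≤ c0 * gfun G z0 C1 Ayz)
 :
    ∃ c > 0, ∀ x ∈ D, ∀ y ∈ D, ∀ z ∈ D, ∀ w ∈ D,
      ∀ Axy ∈ BB D M ε1 z0 x y, ∀ Ayz ∈ BB D M ε1 z0 y z,
      ∀ Azw ∈ BB D M ε1 z0 z w, ∀ Axw ∈ BB D M ε1 z0 x w,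
      gfun G z0 C1 Axw ^ 2 ≤
        c * (gfun G z0 C1 Axy ^ 2 + gfun G z0 C1 Ayz ^ 2 + gfun G z0 C1 Azw ^ 2) := by
  obtain ⟨c0, hc0, hm⟩ := hmono
  have hC1pos : 0 < C1 := by
    have hM0 : 0 < M := by rw [hM]; positivity
    have hz0r : 0 < rho D z0 := lt_trans (by positivity) hz0l
    rw [hC1]
    have : (0:ℝ) < C0 := lt_of_lt_of_le one_pos hC0
    positivity
  -- nonnegativity of gfun on BB points
  have hgnn : ∀ B : EuclideanSpace ℝ (Fin d), (B = z0 ∨ B ∈ D) → 0 ≤ gfun G z0 C1 B := by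
    intro B hB
    unfold gfun
    split_ifs with hz
    · exact hC1pos.le
    · rcases hB with h | h
      · exact absurd h hz
      · exact le_min (hGpos B h z0 hz0D hz).le hC1pos.le
  set c1 : ℝ := max c0 (c0 * c0) with hc1def
  have hc1pos : 0 < c1 := lt_of_lt_of_le hc0 (le_max_left _ _)
  refine ⟨c1 ^ 2, by positivity, ?_⟩
  intro x hx y hy z hz w hw Axy hAxy Ayz hAyz Azw hAzw Axw hAxw
  set g := gfun G z0 C1 with hg
  have hAxy0 : 0 ≤ g Axy := hgnn _ (BB_mem_cases hAxy)
  have hAyz0 : 0 ≤ g Ayz := hgnn _ (BB_mem_cases hAyz)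
  have hAzw0 : 0 ≤ g Azw := hgnn _ (BB_mem_cases hAzw)
  have hAxw0 : 0 ≤ g Axw := hgnn _ (BB_mem_cases hAxw)
  -- key claim: g Axw ≤ c1 * (one of the three)
  have key : g Axw ≤ c1 * g Axy ∨ g Axw ≤ c1 * g Ayz ∨ g Axw ≤ c1 * g Azw := by
    by_cases h1 : rxy D w y ≤ rxy D x y
    · left
      have := hm w hw x hx y hy h1 Axw (by rwa [BB_symm]) Axy hAxy
      calc g Axw ≤ c0 * g Axy := this
      _ ≤ c1 * g Axy := mul_le_mul_of_nonneg_right (le_max_left _ _) hAxy0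
    · push_neg at h1
      obtain ⟨A', hA'⟩ := BB_ne hd hDopen hDbdd hκ0 hκ2 hR hfat hM hε1 z0 hw hy
      have hA'0 : 0 ≤ g A' := hgnn _ (BB_mem_cases hA')
      have step1 : g Axw ≤ c0 * g A' := hm x hx w hw y hy h1.le Axw hAxw A' hA'
      by_cases h2 : rxy D w z ≤ rxy D y z
      · right; left
        have step2 : g A' ≤ c0 * g Ayz := hm w hw y hy z hz h2 A' hA' Ayz hAyz
        calc g Axw ≤ c0 * g A' := step1
        _ ≤ c0 * (c0 * g Ayz) := mul_le_mul_of_nonneg_left step2 hc0.le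
        _ = c0 * c0 * g Ayz := by ring
        _ ≤ c1 * g Ayz := mul_le_mul_of_nonneg_right (le_max_right _ _) hAyz0
      · right; right
        push_neg at h2
        have step2 : g A' ≤ c0 * g Azw :=
          hm y hy w hw z hz h2.le A' (by rwa [BB_symm]) Azw (by rwa [BB_symm])
        calc g Axw ≤ c0 * g A' := step1
        _ ≤ c0 * (c0 * g Azw) := mul_le_mul_of_nonneg_left step2 hc0.le
        _ = c0 * c0 * g Azw := by ring
        _ ≤ c1 * g Azw := mul_le_mul_of_nonneg_right (le_max_right _ _) hAzw0
  have hsq : ∀ b : ℝ, 0 ≤ b → g Axw ≤ c1 * b → g Axw ^ 2 ≤ c1 ^ 2 * b ^ 2 := by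
    intro b hb hle
    calc g Axw ^ 2 ≤ (c1 * b) ^ 2 := pow_le_pow_left₀ hAxw0 hle 2
    _ = c1 ^ 2 * b ^ 2 := by ring
  rcases key with h | h | h
  · have := hsq _ hAxy0 h
    nlinarith [sq_nonneg (g Ayz), sq_nonneg (g Azw), sq_nonneg c1]
  · have := hsq _ hAyz0 h
    nlinarith [sq_nonneg (g Axy), sq_nonneg (g Azw), sq_nonneg c1]
  · have := hsq _ hAzw0 h
    nlinarith [sq_nonneg (g Axy), sq_nonneg (g Ayz), sq_nonneg c1]
end

section
/- Let γ ∈ (0,α). Assume: (i) condition (C1) with exponent γ: there is c0 > 0 such that G(A_s(Q), z0) ≥ c0·(s/r)^γ·G(A_r(Q), z0) for all Q ∈ ∂D, r ∈ (0,R) and s ∈ (0,r); (ii) the interior lower bound: for every c1 > 0 there is c > 0 such that G(x,y) ≥ c·|x-y|^{α-d} whenever x, y ∈ D satisfy 0 < |x-y| ≤ c1·min(ρ_D(x), ρ_D(y)). Then there exists a constant c > 0 such that for every x, y ∈ D with r(x,y) < ε1: min(g(A_{r(x,y)}(Q_x)), g(A_{r(x,y)}(Q_y))) ≥ c·r(x,y)^γ.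 -/
open Metric Set MeasureTheory

/-!
Fix a reference scale `r₀ < R` with `ε1 < r₀ ≤ ρ_D(z0)`. For every `Q ∈ ∂D` both `A_{r₀}(Q)` and
`z0` lie at distance at least `κ r₀` from `∂D`, and `D` is bounded, so the interior lower bound
gives `G(A_{r₀}(Q), z0) ≥ a > 0` uniformly in `Q`. Condition (C1) transports this down to
`G(A_r(Q), z0) ≥ c0 a (r / r₀)^γ` for `r < r₀`, while the truncation level of `g` satisfies
`C1 ≥ (C1 / ε1^γ) r^γ` for `r ≤ ε1`.
-/

section MetricSpace

variable {X : Type*} [MetricSpace X] {D : Set X}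

theorem le_infDist_frontier_of_ball_subset (hne : (frontier D).Nonempty) {a : X} {r : ℝ}
    (h : ball a r ⊆ D) : r ≤ infDist a (frontier D) := by
  refine (le_infDist hne).2 fun p hp => ?_
  by_contra! hpr
  exact hp.2 (interior_maximal h isOpen_ball (mem_ball_comm.1 hpr))

theorem infDist_frontier_pos (hD : IsOpen D) (hne : (frontier D).Nonempty) {x : X}
    (hx : x ∈ D) : 0 < infDist x (frontier D) := by
  refine (infDist_pos_iff_notMem_closure hne).1 fun hxf => ?_
  rw [isClosed_frontier.closure_eq] at hxf
  exact (hD.inter_frontier_eq ▸ ⟨hx, hxf⟩ : x ∈ (∅ : Set X))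

theorem infDist_frontier_mem_Ico_of_ball_subset {Q A : X} (hQ : Q ∈ frontier D) {κ r : ℝ}
    (hκr : 0 < κ * r) (hA : ball A (κ * r) ⊆ D ∩ ball Q r) :
    infDist A (frontier D) ∈ Ico (κ * r) r :=
  ⟨le_infDist_frontier_of_ball_subset ⟨Q, hQ⟩ (hA.trans inter_subset_left),
    (infDist_le_dist_of_mem hQ).trans_lt (hA (mem_ball_self hκr)).2⟩

end MetricSpace

theorem exists_pos_le_of_interior_lowerBound {X : Type*} [MetricSpace X] {D : Set X}
    (hD : Bornology.IsBounded D) {ρ : X → ℝ} {G : X → X → ℝ} {β : ℝ} (hβ : β ≤ 0)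
    (hint : ∀ c1 : ℝ, 0 < c1 → ∃ c > 0, ∀ x ∈ D, ∀ y ∈ D, x ≠ y →
      dist x y ≤ c1 * min (ρ x) (ρ y) → c * dist x y ^ β ≤ G x y)
    {δ : ℝ} (hδ : 0 < δ) :
    ∃ c > 0, ∀ x ∈ D, ∀ y ∈ D, x ≠ y → δ ≤ min (ρ x) (ρ y) → c ≤ G x y := by
  obtain ⟨L, hL, hLD⟩ : ∃ L > 0, ∀ x ∈ D, ∀ y ∈ D, dist x y ≤ L := by
    obtain ⟨L, hL⟩ := isBounded_iff.1 hD
    exact ⟨max L 1, by positivity, fun x hx y hy => (hL hx hy).trans (le_max_left _ _)⟩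
  obtain ⟨c, hc, hcG⟩ := hint (L / δ) (by positivity)
  refine ⟨c * L ^ β, by positivity, fun x hx y hy hxy hδxy => ?_⟩
  have hdist : dist x y ≤ L / δ * min (ρ x) (ρ y) :=
    calc dist x y ≤ L := hLD x hx y hy
      _ = L / δ * δ := (div_mul_cancel₀ L hδ.ne').symm
      _ ≤ L / δ * min (ρ x) (ρ y) := by gcongr
  calc c * L ^ β ≤ c * dist x y ^ β := mul_le_mul_of_nonneg_left
        (Real.rpow_le_rpow_of_nonpos (dist_pos.2 hxy) (hLD x hx y hy) hβ) hc.le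
    _ ≤ G x y := hcG x hx y hy hxy hdist

theorem exists_rpow_le_of_fat {X : Type*} [MetricSpace X] {D : Set X}
    (hD : Bornology.IsBounded D) {A : X → ℝ → X} {κ r₀ : ℝ} (hκ : 0 < κ) (hκ1 : κ ≤ 1)
    (hr₀ : 0 < r₀)
    (hfat : ∀ Q ∈ frontier D, A Q r₀ ∈ D ∧ ball (A Q r₀) (κ * r₀) ⊆ D ∩ ball Q r₀)
    {z0 : X} (hz0D : z0 ∈ D) (hz0 : r₀ ≤ infDist z0 (frontier D))
    {G : X → X → ℝ} {β γ : ℝ} (hβ : β ≤ 0)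
    (hC1cond : ∃ c0 > 0, ∀ Q ∈ frontier D, ∀ s : ℝ, 0 < s → s < r₀ →
      c0 * (s / r₀) ^ γ * G (A Q r₀) z0 ≤ G (A Q s) z0)
    (hint : ∀ c1 : ℝ, 0 < c1 → ∃ c > 0, ∀ x ∈ D, ∀ y ∈ D, x ≠ y →
      dist x y ≤ c1 * min (infDist x (frontier D)) (infDist y (frontier D)) →
        c * dist x y ^ β ≤ G x y) :
    ∃ c > 0, ∀ Q ∈ frontier D, ∀ s : ℝ, 0 < s → s < r₀ → c * s ^ γ ≤ G (A Q s) z0 := by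
  obtain ⟨c0, hc0, hdoubling⟩ := hC1cond
  obtain ⟨a, ha, haG⟩ := exists_pos_le_of_interior_lowerBound hD hβ hint (mul_pos hκ hr₀)
  have haA : ∀ Q ∈ frontier D, a ≤ G (A Q r₀) z0 := fun Q hQ => by
    obtain ⟨hAD, hAball⟩ := hfat Q hQ
    obtain ⟨hκA, hAr₀⟩ :=
      infDist_frontier_mem_Ico_of_ball_subset hQ (mul_pos hκ hr₀) hAball
    have hκr₀ : κ * r₀ ≤ r₀ := mul_le_of_le_one_left hr₀.le hκ1
    refine haG _ hAD z0 hz0D ?_ (le_min hκA (hκr₀.trans hz0))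
    rintro rfl
    exact (hAr₀.trans_le hz0).false
  refine ⟨c0 * a / r₀ ^ γ, by positivity, fun Q hQ s hs hsr₀ => ?_⟩
  calc c0 * a / r₀ ^ γ * s ^ γ = c0 * (s / r₀) ^ γ * a := by
        rw [Real.div_rpow hs.le hr₀.le]; ring
    _ ≤ c0 * (s / r₀) ^ γ * G (A Q r₀) z0 := by gcongr; exact haA Q hQ
    _ ≤ G (A Q s) z0 := hdoubling Q hQ s hs hsr₀

theorem exists_scale_between_s9 {κ R M ε1 ρ : ℝ} (hκ0 : 0 < κ) (hκ2 : κ ≤ 1 / 2) (hR : 0 < R)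
    (hM : M = 2 / κ) (hε1 : ε1 = R / (12 * M)) (hρ : 2 * R / M < ρ) :
    ∃ r₀, 0 < ε1 ∧ ε1 < r₀ ∧ r₀ < R ∧ r₀ ≤ ρ := by
  have hM4 : 4 ≤ M := by rw [hM, le_div_iff₀ hκ0]; linarith
  have hRM : 0 < R / M := by positivity
  have hRM4 : R / M ≤ R / 4 := div_le_div_of_nonneg_left hR.le (by norm_num) hM4
  rw [mul_div_assoc] at hρ
  rw [mul_comm, ← div_div] at hε1
  exact ⟨min (R / 2) (ρ / 2), by linarith, lt_min (by linarith) (by linarith),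
    (min_le_left _ _).trans_lt (by linarith), (min_le_right _ _).trans (by linarith)⟩

theorem le_gfun {d : ℕ} {G : EuclideanSpace ℝ (Fin d) → EuclideanSpace ℝ (Fin d) → ℝ}
    {z0 x : EuclideanSpace ℝ (Fin d)} {c C1 : ℝ} (hC1 : c ≤ C1) (hG : x ≠ z0 → c ≤ G x z0) :
    c ≤ gfun G z0 C1 x := by
  unfold gfun
  split_ifs with hx
  exacts [hC1, le_min (hG hx) hC1]

theorem stmt9_general
    {d : ℕ}
    {D : Set (EuclideanSpace ℝ (Fin d))} (hDopen : IsOpen D) (hDbdd : Bornology.IsBounded D)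
    {κ R : ℝ} (hκ0 : 0 < κ) (hκ2 : κ ≤ 1 / 2) (hR : 0 < R)
    {A : EuclideanSpace ℝ (Fin d) → ℝ → EuclideanSpace ℝ (Fin d)}
    (hfat : ∀ Q ∈ frontier D, ∀ r : ℝ, 0 < r → r < R →
      A Q r ∈ D ∧ ball (A Q r) (κ * r) ⊆ D ∩ ball Q r)
    {M ε1 : ℝ} (hM : M = 2 / κ) (hε1 : ε1 = R / (12 * M))
    {z0 : EuclideanSpace ℝ (Fin d)} (hz0D : z0 ∈ D)
    (hz0l : 2 * R / M < rho D z0)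
    {α : ℝ} (hαd : α < d)
    {G : EuclideanSpace ℝ (Fin d) → EuclideanSpace ℝ (Fin d) → ℝ}
    {C0 : ℝ} (hC0 : 1 ≤ C0)
    {C1 : ℝ} (hC1 : C1 = C0 * (2 : ℝ) ^ ((d : ℝ) - α) * rho D z0 ^ (α - d))
    {Qb : EuclideanSpace ℝ (Fin d) → EuclideanSpace ℝ (Fin d)}
    (hQb : ∀ x ∈ D, Qb x ∈ frontier D ∧ dist x (Qb x) = rho D x)
    {γ : ℝ} (hγ0 : 0 < γ)
    (hC1cond : ∃ c0 > 0, ∀ Q ∈ frontier D, ∀ r : ℝ, 0 < r → r < R → ∀ s : ℝ, 0 < s → s < r →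
      c0 * (s / r) ^ γ * G (A Q r) z0 ≤ G (A Q s) z0)
    (hint : ∀ c1 : ℝ, 0 < c1 → ∃ c > 0, ∀ x ∈ D, ∀ y ∈ D, x ≠ y →
      dist x y ≤ c1 * min (rho D x) (rho D y) → c * dist x y ^ (α - d) ≤ G x y)
 :
    ∃ c > 0, ∀ x ∈ D, ∀ y ∈ D, rxy D x y < ε1 →
      c * rxy D x y ^ γ ≤
        min (gfun G z0 C1 (A (Qb x) (rxy D x y))) (gfun G z0 C1 (A (Qb y) (rxy D x y))) := by
  obtain ⟨r₀, hε1, hε1r₀, hr₀R, hr₀z0⟩ := exists_scale_between_s9 hκ0 hκ2 hR hM hε1 hz0l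
  have hr₀ : 0 < r₀ := hε1.trans hε1r₀
  have hC1pos : 0 < C1 := by
    rw [hC1]; have := Real.rpow_pos_of_pos (hr₀.trans_le hr₀z0) (α - d); positivity
  obtain ⟨c0, hc0, hdoubling⟩ := hC1cond
  obtain ⟨c, hc, hcG⟩ := exists_rpow_le_of_fat hDbdd hκ0 (by linarith) hr₀
    (fun Q hQ => hfat Q hQ r₀ hr₀ hr₀R) hz0D hr₀z0 (by linarith)
    ⟨c0, hc0, fun Q hQ => hdoubling Q hQ r₀ hr₀ hr₀R⟩ hint
  refine ⟨min c (C1 / ε1 ^ γ), by positivity, fun x hx y hy hxy => ?_⟩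
  set r := rxy D x y
  have hr : 0 < r := (infDist_frontier_pos hDopen ⟨_, (hQb x hx).1⟩ hx).trans_le
    ((le_max_left _ _).trans (le_max_left _ _))
  have hC1r : min c (C1 / ε1 ^ γ) * r ^ γ ≤ C1 :=
    calc min c (C1 / ε1 ^ γ) * r ^ γ ≤ C1 / ε1 ^ γ * ε1 ^ γ := by
          gcongr
          exact min_le_right _ _
      _ = C1 := div_mul_cancel₀ C1 (by positivity)
  have key : ∀ Q ∈ frontier D, min c (C1 / ε1 ^ γ) * r ^ γ ≤ gfun G z0 C1 (A Q r) :=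
    fun Q hQ => le_gfun hC1r fun _ => (mul_le_mul_of_nonneg_right (min_le_left _ _)
      (by positivity)).trans (hcG Q hQ r hr (hxy.trans hε1r₀))
  exact le_min (key _ (hQb x hx).1) (key _ (hQb y hy).1)

theorem stmt9
    {d : ℕ} (hd : 2 ≤ d)
    {D : Set (EuclideanSpace ℝ (Fin d))} (hDopen : IsOpen D) (hDbdd : Bornology.IsBounded D)
    {κ R : ℝ} (hκ0 : 0 < κ) (hκ2 : κ ≤ 1 / 2) (hR : 0 < R)
    {A : EuclideanSpace ℝ (Fin d) → ℝ → EuclideanSpace ℝ (Fin d)}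
    (hfat : ∀ Q ∈ frontier D, ∀ r : ℝ, 0 < r → r < R →
      A Q r ∈ D ∧ ball (A Q r) (κ * r) ⊆ D ∩ ball Q r)
    {M ε1 : ℝ} (hM : M = 2 / κ) (hε1 : ε1 = R / (12 * M))
    {z0 : EuclideanSpace ℝ (Fin d)} (hz0D : z0 ∈ D)
    (hz0l : 2 * R / M < rho D z0) (hz0u : rho D z0 < R)
    {α : ℝ} (hα0 : 0 < α) (hα2 : α < 2) (hαd : α < d)
    {G : EuclideanSpace ℝ (Fin d) → EuclideanSpace ℝ (Fin d) → ℝ}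
    (hGsymm : ∀ x y, G x y = G y x)
    (hGpos : ∀ x ∈ D, ∀ y ∈ D, x ≠ y → 0 < G x y)
    {C0 : ℝ} (hC0 : 1 ≤ C0)
    (hGup : ∀ x ∈ D, ∀ y ∈ D, x ≠ y → G x y ≤ C0 * dist x y ^ (α - d))
    (hGlow : ∀ x ∈ D, ∀ y ∈ D, x ≠ y → dist x y ≤ rho D y / 2 →
      C0⁻¹ * dist x y ^ (α - d) ≤ G x y)
    {C1 : ℝ} (hC1 : C1 = C0 * (2 : ℝ) ^ ((d : ℝ) - α) * rho D z0 ^ (α - d))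
    {Qb : EuclideanSpace ℝ (Fin d) → EuclideanSpace ℝ (Fin d)}
    (hQb : ∀ x ∈ D, Qb x ∈ frontier D ∧ dist x (Qb x) = rho D x)
    {γ : ℝ} (hγ0 : 0 < γ) (hγα : γ < α)
    (hC1cond : ∃ c0 > 0, ∀ Q ∈ frontier D, ∀ r : ℝ, 0 < r → r < R → ∀ s : ℝ, 0 < s → s < r →
      c0 * (s / r) ^ γ * G (A Q r) z0 ≤ G (A Q s) z0)
    (hint : ∀ c1 : ℝ, 0 < c1 → ∃ c > 0, ∀ x ∈ D, ∀ y ∈ D, x ≠ y →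
      dist x y ≤ c1 * min (rho D x) (rho D y) → c * dist x y ^ (α - d) ≤ G x y)
 :
    ∃ c > 0, ∀ x ∈ D, ∀ y ∈ D, rxy D x y < ε1 →
      c * rxy D x y ^ γ ≤
        min (gfun G z0 C1 (A (Qb x) (rxy D x y))) (gfun G z0 C1 (A (Qb y) (rxy D x y))) :=
  stmt9_general hDopen hDbdd hκ0 hκ2 hR hfat hM hε1 hz0D hz0l hαd hC0 hC1 hQb hγ0 hC1cond hint
end

section
/- Let d ≥ 2, 0 < α < d and γ > 0, and let D ⊂ ℝ^d be a bounded set. There exists a constant c > 0, depending only on diam(D), d, α and γ, such that for all x, y, z, w ∈ D with x ≠ y, z ≠ w and y ≠ z: max(min(|x-w|, |y-z|)/|x-y|, 1)^γ · max(min(|x-w|, |y-z|)/|z-w|, 1)^γ · |x-w|^{d-α}/(|x-y|^{d-α}·|z-w|^{d-α}) ≤ c·( |x-y|^{-(d-α+γ)} + |z-w|^{-(d-α+γ)} + |y-z|^{d-α}·|x-y|^{-(d-α)}·|z-w|^{-(d-α)} + |y-z|^{d-α+γ}·|x-y|^{-(d-α)}·|z-w|^{-(d-α+γ)} + |y-z|^{d-α+γ}·|x-y|^{-(d-α+γ)}·|z-w|^{-(d-α)}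 + |y-z|^{d-α+2γ}·|x-y|^{-(d-α+γ)}·|z-w|^{-(d-α+γ)} ). -/
/-! Write `a = |x - y|`, `b = |z - w|`, `m = |y - z|`, `p = |x - w| ≤ a + m + b` and `β = d - α > 0`.
Each factor `max (min p m / t) 1` is at most `max m t / t`, and `p ^ β ≤ 3 ^ β max(a, m, b) ^ β`.
By symmetry let `a ≤ b`. If `m ≤ b` the left side is at most `3 ^ β max(m, a) ^ γ a ^ (-(β + γ))`,
and `max(m, a) ≤ R`, a bound for the diameter of `D`; if `m ≥ b` it is at most
`3 ^ β m ^ (β + 2γ) (a b) ^ (-(β + γ))`. So the first, second and last of the six terms already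
suffice, with `c = 3 ^ β max(R, 1) ^ γ`. -/

open Real

lemma max_min_div_le_max_div (p : ℝ) {m t : ℝ} (ht : 0 < t) :
    max (min p m / t) 1 ≤ max m t / t :=
  max_le (div_le_div_of_nonneg_right ((min_le_right p m).trans (le_max_left m t)) ht.le)
    ((one_le_div ht).mpr (le_max_right m t))

lemma add_add_rpow_le_three_rpow {a m b M β : ℝ} (hβ : 0 ≤ β) (ha : 0 ≤ a) (hm : 0 ≤ m)
    (hb : 0 ≤ b) (haM : a ≤ M) (hmM : m ≤ M) (hbM : b ≤ M) :
    (a + m + b) ^ β ≤ 3 ^ β * M ^ β := by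
  rw [← mul_rpow (by norm_num) (ha.trans haM)]
  exact rpow_le_rpow (by positivity) (by linarith) hβ

section

variable {a b m p R β γ : ℝ}

lemma max_div_rpow_mul_le_of_le (hab : a ≤ b) (ha : 0 < a) (hm : 0 < m) (hβ : 0 ≤ β)
    (hγ : 0 ≤ γ) (hR : 1 ≤ R) (haR : a ≤ R) (hmR : m ≤ R) :
    (max m a / a) ^ γ * (max m b / b) ^ γ * ((a + m + b) ^ β / (a ^ β * b ^ β)) ≤
      3 ^ β * R ^ γ * (a ^ (-(β + γ)) + b ^ (-(β + γ)) +
        m ^ (β + 2 * γ) * a ^ (-(β + γ)) * b ^ (-(β + γ))) := by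
  have hb : 0 < b := ha.trans_le hab
  have ha' : 0 ≤ a ^ (-(β + γ)) := by positivity
  have hb' : 0 ≤ b ^ (-(β + γ)) := by positivity
  have hm' : 0 ≤ m ^ (β + 2 * γ) * a ^ (-(β + γ)) * b ^ (-(β + γ)) := by positivity
  have hRγ : 1 ≤ R ^ γ := one_le_rpow hR hγ
  rcases le_total m b with hmb | hbm
  · calc (max m a / a) ^ γ * (max m b / b) ^ γ * ((a + m + b) ^ β / (a ^ β * b ^ β))
          = (max m a) ^ γ / a ^ γ * ((a + m + b) ^ β / (a ^ β * b ^ β)) := by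
            rw [max_eq_right hmb, div_self hb.ne', one_rpow, mul_one,
              div_rpow (hm.le.trans (le_max_left m a)) ha.le]
        _ ≤ R ^ γ / a ^ γ * (3 ^ β * b ^ β / (a ^ β * b ^ β)) := by
            gcongr
            · exact max_le hmR haR
            · exact add_add_rpow_le_three_rpow hβ ha.le hm.le hb.le hab hmb le_rfl
        _ = 3 ^ β * R ^ γ * a ^ (-(β + γ)) := by
            rw [rpow_neg ha.le, rpow_add ha]
            field_simp
        _ ≤ _ := by gcongr; linarith
  · have ham : a ≤ m := hab.trans hbm
    calc (max m a / a) ^ γ * (max m b / b) ^ γ * ((a + m + b) ^ β / (a ^ β * b ^ β))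
          = m ^ γ / a ^ γ * (m ^ γ / b ^ γ) * ((a + m + b) ^ β / (a ^ β * b ^ β)) := by
            rw [max_eq_left ham, max_eq_left hbm, div_rpow hm.le ha.le, div_rpow hm.le hb.le]
        _ ≤ m ^ γ / a ^ γ * (m ^ γ / b ^ γ) * (3 ^ β * m ^ β / (a ^ β * b ^ β)) := by
            gcongr
            exact add_add_rpow_le_three_rpow hβ ha.le hm.le hb.le ham le_rfl hbm
        _ = 3 ^ β * (m ^ (β + 2 * γ) * a ^ (-(β + γ)) * b ^ (-(β + γ))) := by
            rw [rpow_neg ha.le, rpow_neg hb.le, rpow_add ha, rpow_add hb, two_mul, ← add_assoc,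
              rpow_add hm, rpow_add hm]
            field_simp
        _ ≤ 3 ^ β * R ^ γ * (m ^ (β + 2 * γ) * a ^ (-(β + γ)) * b ^ (-(β + γ))) :=
            mul_le_mul_of_nonneg_right (le_mul_of_one_le_right (by positivity) hRγ) hm'
        _ ≤ _ := by gcongr; linarith

lemma max_div_rpow_mul_le (ha : 0 < a) (hb : 0 < b) (hm : 0 < m) (hβ : 0 ≤ β) (hγ : 0 ≤ γ)
    (hR : 1 ≤ R) (haR : a ≤ R) (hbR : b ≤ R) (hmR : m ≤ R) :
    (max m a / a) ^ γ * (max m b / b) ^ γ * ((a + m + b) ^ β / (a ^ β * b ^ β)) ≤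
      3 ^ β * R ^ γ * (a ^ (-(β + γ)) + b ^ (-(β + γ)) +
        m ^ (β + 2 * γ) * a ^ (-(β + γ)) * b ^ (-(β + γ))) := by
  rcases le_total a b with hab | hba
  · exact max_div_rpow_mul_le_of_le hab ha hm hβ hγ hR haR hmR
  · have h := max_div_rpow_mul_le_of_le hba hb hm hβ hγ hR hbR hmR
    rw [show b + m + a = a + m + b by ring] at h
    convert h using 1 <;> ring

lemma max_min_div_rpow_mul_le_expansion (ha : 0 < a) (hb : 0 < b) (hm : 0 < m) (hp : 0 ≤ p)
    (hβ : 0 ≤ β) (hγ : 0 ≤ γ) (hR : 1 ≤ R) (haR : a ≤ R) (hbR : b ≤ R) (hmR : m ≤ R)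
    (hpabm : p ≤ a + m + b) :
    (max (min p m / a) 1) ^ γ * (max (min p m / b) 1) ^ γ * (p ^ β / (a ^ β * b ^ β)) ≤
      3 ^ β * R ^ γ *
        (a ^ (-(β + γ)) + b ^ (-(β + γ)) + m ^ β * a ^ (-β) * b ^ (-β) +
          m ^ (β + γ) * a ^ (-β) * b ^ (-(β + γ)) +
          m ^ (β + γ) * a ^ (-(β + γ)) * b ^ (-β) +
          m ^ (β + 2 * γ) * a ^ (-(β + γ)) * b ^ (-(β + γ))) := by
  calc (max (min p m / a) 1) ^ γ * (max (min p m / b) 1) ^ γ * (p ^ β / (a ^ β * b ^ β))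
      ≤ (max m a / a) ^ γ * (max m b / b) ^ γ * ((a + m + b) ^ β / (a ^ β * b ^ β)) := by
        gcongr
        · exact max_min_div_le_max_div p ha
        · exact max_min_div_le_max_div p hb
    _ ≤ 3 ^ β * R ^ γ * (a ^ (-(β + γ)) + b ^ (-(β + γ)) +
          m ^ (β + 2 * γ) * a ^ (-(β + γ)) * b ^ (-(β + γ))) :=
        max_div_rpow_mul_le ha hb hm hβ hγ hR haR hbR hmR
    _ ≤ _ := by
        have : 0 ≤ m ^ β * a ^ (-β) * b ^ (-β) + m ^ (β + γ) * a ^ (-β) * b ^ (-(β + γ)) +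
            m ^ (β + γ) * a ^ (-(β + γ)) * b ^ (-β) := by positivity
        exact mul_le_mul_of_nonneg_left (by linarith) (by positivity)

end

theorem stmt17_general {d : ℕ} {α γ : ℝ} (hαd : α < d) (hγ : 0 < γ)
    {D : Set (EuclideanSpace ℝ (Fin d))} (hDbdd : Bornology.IsBounded D) :
    ∃ c > 0, ∀ x ∈ D, ∀ y ∈ D, ∀ z ∈ D, ∀ w ∈ D, x ≠ y → z ≠ w → y ≠ z →
      (max (min (dist x w) (dist y z) / dist x y) 1) ^ γ *
          (max (min (dist x w) (dist y z) / dist z w) 1) ^ γ *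
          (dist x w ^ ((d : ℝ) - α) / (dist x y ^ ((d : ℝ) - α) * dist z w ^ ((d : ℝ) - α))) ≤
        c * (dist x y ^ (-((d : ℝ) - α + γ)) + dist z w ^ (-((d : ℝ) - α + γ)) +
          dist y z ^ ((d : ℝ) - α) * dist x y ^ (-((d : ℝ) - α)) * dist z w ^ (-((d : ℝ) - α)) +
          dist y z ^ ((d : ℝ) - α + γ) * dist x y ^ (-((d : ℝ) - α)) *
            dist z w ^ (-((d : ℝ) - α + γ)) +
          dist y z ^ ((d : ℝ) - α + γ) * dist x y ^ (-((d : ℝ) - α + γ)) *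
            dist z w ^ (-((d : ℝ) - α)) +
          dist y z ^ ((d : ℝ) - α + 2 * γ) * dist x y ^ (-((d : ℝ) - α + γ)) *
            dist z w ^ (-((d : ℝ) - α + γ))) := by
  obtain ⟨R₀, hR₀⟩ := Metric.isBounded_iff.mp hDbdd
  set R := max R₀ 1
  have hdist : ∀ {u v}, u ∈ D → v ∈ D → dist u v ≤ R :=
    fun hu hv => (hR₀ hu hv).trans (le_max_left _ _)
  refine ⟨3 ^ ((d : ℝ) - α) * R ^ γ, by positivity, ?_⟩
  intro x hx y hy z hz w hw hxy hzw hyz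
  exact max_min_div_rpow_mul_le_expansion (dist_pos.mpr hxy) (dist_pos.mpr hzw)
    (dist_pos.mpr hyz) dist_nonneg (sub_nonneg.mpr hαd.le) hγ.le (le_max_right _ _)
    (hdist hx hy) (hdist hz hw) (hdist hy hz) (dist_triangle4 x y z w)

theorem stmt17 {d : ℕ} (hd : 2 ≤ d) {α γ : ℝ} (hα0 : 0 < α) (hαd : α < d) (hγ : 0 < γ)
    {D : Set (EuclideanSpace ℝ (Fin d))} (hDbdd : Bornology.IsBounded D) :
    ∃ c > 0, ∀ x ∈ D, ∀ y ∈ D, ∀ z ∈ D, ∀ w ∈ D, x ≠ y → z ≠ w → y ≠ z →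
      (max (min (dist x w) (dist y z) / dist x y) 1) ^ γ *
          (max (min (dist x w) (dist y z) / dist z w) 1) ^ γ *
          (dist x w ^ ((d : ℝ) - α) / (dist x y ^ ((d : ℝ) - α) * dist z w ^ ((d : ℝ) - α))) ≤
        c * (dist x y ^ (-((d : ℝ) - α + γ)) + dist z w ^ (-((d : ℝ) - α + γ)) +
          dist y z ^ ((d : ℝ) - α) * dist x y ^ (-((d : ℝ) - α)) * dist z w ^ (-((d : ℝ) - α)) +
          dist y z ^ ((d : ℝ) - α + γ) * dist x y ^ (-((d : ℝ) - α)) *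
            dist z w ^ (-((d : ℝ) - α + γ)) +
          dist y z ^ ((d : ℝ) - α + γ) * dist x y ^ (-((d : ℝ) - α + γ)) *
            dist z w ^ (-((d : ℝ) - α)) +
          dist y z ^ ((d : ℝ) - α + 2 * γ) * dist x y ^ (-((d : ℝ) - α + γ)) *
            dist z w ^ (-((d : ℝ) - α + γ))) :=
  stmt17_general hαd hγ hDbdd
end
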